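/- arXiv:1304.7440 — 4 statements merged into one kernel-verified Lean document; each statement's English description precedes it below -/
import Mathlib

section
/- In the Yokonuma–Hecke algebra Y_{d,n}(u), for every fixed 1 ≤ j ≤ n−2, the two-sided ideal generated by the set {r_{i,i+1} : 1 ≤ i ≤ n−2} equals the two-sided ideal generated by the single element r_{j,j+1}. In particular, with γ := g_1 ⋯ g_{n−1}, one has γ^{i−1} r_{1,2} = r_{i,i+1} γ^{i−1} for all 1 ≤ i ≤ n−2. -/
/-!
Conjugation by `γ = g_1 ⋯ g_{n-1}` shifts indices: `γ t_i = t_{i+1} γ`, and the braid relation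
gives `γ g_i = g_{i+1} γ` for `i ≤ n - 2`, hence `γ r_{i,i+1} = r_{i+1,i+2} γ`. Each `g_i` is
invertible because `e_i` is an idempotent commuting with `g_i`, so `γ` is a unit and all the
`r_{i,i+1}` are conjugate; conjugate elements generate the same two-sided ideal.

That `e_i` is idempotent and commutes with `g_i` comes from writing `e_i = d⁻¹ S t_{i+1}` with
`S = ∑_{s<d} t_i^s t_{i+1}^{d-1-s}`: the identity `S (t_i - t_{i+1}) = t_i^d - t_{i+1}^d = 0`
lets `S` absorb powers of `t_i` as powers of `t_{i+1}`.
-/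

noncomputable section

open scoped BigOperators

/-- Index type for the generators of the Yokonuma–Hecke algebra `Y_{d,n}(u)`:
`Sum.inl i` encodes the braiding generator `g_{i+1}` and `Sum.inr j` the framing
generator `t_{j+1}` (`0`-based encoding of the `1`-based generators). -/
abbrev YHIdx (n : ℕ) := Sum (Fin (n - 1)) (Fin n)

/-- The free `ℂ`-algebra on the generators `g_1, …, g_{n-1}, t_1, …, t_n`. -/
abbrev YHFree (n : ℕ) := FreeAlgebra ℂ (YHIdx n)

/-- The generator `g_i` (1-based) of the free algebra; junk value `0` out of range. -/
def gF (n i : ℕ) : YHFree n :=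
  if h : 1 ≤ i ∧ i ≤ n - 1 then FreeAlgebra.ι ℂ (Sum.inl ⟨i - 1, by omega⟩) else 0

/-- The generator `t_j` (1-based) of the free algebra; junk value `0` out of range. -/
def tF (n j : ℕ) : YHFree n :=
  if h : 1 ≤ j ∧ j ≤ n then FreeAlgebra.ι ℂ (Sum.inr ⟨j - 1, by omega⟩) else 0

/-- The element `e_i := (1/d) ∑_{s=0}^{d-1} t_i^s t_{i+1}^{d-s}` of the free algebra. -/
def eF (d n i : ℕ) : YHFree n :=
  (d : ℂ)⁻¹ • ∑ s ∈ Finset.range d, tF n i ^ s * tF n (i + 1) ^ (d - s)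

/-- The defining relations of the Yokonuma–Hecke algebra `Y_{d,n}(u)`. -/
inductive YHRel (d n : ℕ) (u : ℂ) : YHFree n → YHFree n → Prop
  | g_comm {i j : ℕ} (hi : 1 ≤ i) (hij : i + 1 < j) (hj : j ≤ n - 1) :
      YHRel d n u (gF n i * gF n j) (gF n j * gF n i)
  | braid {i : ℕ} (hi : 1 ≤ i) (hi' : i + 1 ≤ n - 1) :
      YHRel d n u (gF n i * gF n (i + 1) * gF n i)
        (gF n (i + 1) * gF n i * gF n (i + 1))
  | t_comm {i j : ℕ} (hi : 1 ≤ i) (hi' : i ≤ n) (hj : 1 ≤ j) (hj' : j ≤ n) :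
      YHRel d n u (tF n i * tF n j) (tF n j * tF n i)
  | t_pow {i : ℕ} (hi : 1 ≤ i) (hi' : i ≤ n) : YHRel d n u (tF n i ^ d) 1
  | g_t {i : ℕ} (hi : 1 ≤ i) (hi' : i ≤ n - 1) :
      YHRel d n u (gF n i * tF n i) (tF n (i + 1) * gF n i)
  | g_t' {i : ℕ} (hi : 1 ≤ i) (hi' : i ≤ n - 1) :
      YHRel d n u (gF n i * tF n (i + 1)) (tF n i * gF n i)
  | g_t_comm {i j : ℕ} (hi : 1 ≤ i) (hi' : i ≤ n - 1) (hj : 1 ≤ j) (hj' : j ≤ n)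
      (h1 : j ≠ i) (h2 : j ≠ i + 1) :
      YHRel d n u (gF n i * tF n j) (tF n j * gF n i)
  | quad {i : ℕ} (hi : 1 ≤ i) (hi' : i ≤ n - 1) :
      YHRel d n u (gF n i ^ 2)
        (1 + (u - 1) • eF d n i + (u - 1) • (eF d n i * gF n i))

/-- The Yokonuma–Hecke algebra `Y_{d,n}(u)`: the quotient of the free algebra on the
generators `g_1, …, g_{n-1}, t_1, …, t_n` by (the two-sided ideal generated by) the
defining relations. -/
abbrev YH (d n : ℕ) (u : ℂ) := RingQuot (YHRel d n u)

/-- The generator `g_i` of `Y_{d,n}(u)` (1-based). -/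
def yg (d n : ℕ) (u : ℂ) (i : ℕ) : YH d n u :=
  RingQuot.mkAlgHom ℂ (YHRel d n u) (gF n i)

/-- The generator `t_j` of `Y_{d,n}(u)` (1-based). -/
def yt (d n : ℕ) (u : ℂ) (j : ℕ) : YH d n u :=
  RingQuot.mkAlgHom ℂ (YHRel d n u) (tF n j)

/-- The idempotent `e_i = (1/d) ∑_{s=0}^{d-1} t_i^s t_{i+1}^{d-s}` in `Y_{d,n}(u)`. -/
def ye (d n : ℕ) (u : ℂ) (i : ℕ) : YH d n u :=
  (d : ℂ)⁻¹ • ∑ s ∈ Finset.range d, yt d n u i ^ s * yt d n u (i + 1) ^ (d - s)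

/-- The element `e_{i,j} = (1/d) ∑_{s=0}^{d-1} t_i^s t_j^{d-s}` in `Y_{d,n}(u)`. -/
def yeij (d n : ℕ) (u : ℂ) (i j : ℕ) : YH d n u :=
  (d : ℂ)⁻¹ • ∑ s ∈ Finset.range d, yt d n u i ^ s * yt d n u j ^ (d - s)

/-- The Steinberg-type element
`g_{i,i+1} = 1 + g_i + g_{i+1} + g_i g_{i+1} + g_{i+1} g_i + g_i g_{i+1} g_i`. -/
def ygSt (d n : ℕ) (u : ℂ) (i : ℕ) : YH d n u :=
  1 + yg d n u i + yg d n u (i + 1) + yg d n u i * yg d n u (i + 1)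
    + yg d n u (i + 1) * yg d n u i + yg d n u i * yg d n u (i + 1) * yg d n u i

/-- The element `r_{i,i+1} = e_i e_{i+1} g_{i,i+1}` of `Y_{d,n}(u)`. -/
def yr (d n : ℕ) (u : ℂ) (i : ℕ) : YH d n u :=
  ye d n u i * ye d n u (i + 1) * ygSt d n u i

/-- The element `c_{i,i+1} = (∑_{k=0}^{d-1} t_i^k) e_i e_{i+1} g_{i,i+1}` of `Y_{d,n}(u)`. -/
def yc (d n : ℕ) (u : ℂ) (i : ℕ) : YH d n u :=
  (∑ k ∈ Finset.range d, yt d n u i ^ k) *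
    (ye d n u i * ye d n u (i + 1) * ygSt d n u i)


/-- The element `γ = g_1 g_2 ⋯ g_{n-1}` of `Y_{d,n}(u)`. -/
def ygam (d n : ℕ) (u : ℂ) : YH d n u :=
  ((List.range (n - 1)).map fun k => yg d n u (k + 1)).prod
open Finset

theorem SemiconjBy.finset_sum_right {ι R : Type*} [NonUnitalNonAssocSemiring R] {a : R}
    {s : Finset ι} {x y : ι → R} (h : ∀ i ∈ s, SemiconjBy a (x i) (y i)) :
    SemiconjBy a (∑ i ∈ s, x i) (∑ i ∈ s, y i) := by
  simp only [SemiconjBy, mul_sum, sum_mul]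
  exact sum_congr rfl h

theorem TwoSidedIdeal.span_singleton_eq_of_semiconjBy {R : Type*} [Ring R] {a x y : R}
    (ha : IsUnit a) (h : SemiconjBy a x y) : span {x} = span {y} := by
  obtain ⟨v, rfl⟩ := ha
  have hx : x = ↑v⁻¹ * y * ↑v := by rw [mul_assoc, ← h.eq, Units.inv_mul_cancel_left]
  have hy : y = ↑v * x * ↑v⁻¹ := by rw [h.eq, Units.mul_inv_cancel_right]
  apply le_antisymm <;> rw [span_le, Set.singleton_subset_iff, SetLike.mem_coe]
  · rw [hx]
    exact mul_mem_right _ _ _ (mul_mem_left _ _ _ (subset_span rfl))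
  · rw [hy]
    exact mul_mem_right _ _ _ (mul_mem_left _ _ _ (subset_span rfl))

section FramingIdempotent

variable {K A : Type*} [Field K] [Ring A] [Algebra K A] {a b g : A} {d : ℕ}

theorem sum_pow_mul_pow_sub_eq_geom_sum₂_mul (a b : A) (d : ℕ) :
    ∑ s ∈ range d, a ^ s * b ^ (d - s) = (∑ s ∈ range d, a ^ s * b ^ (d - 1 - s)) * b := by
  rw [sum_mul]
  refine sum_congr rfl fun s hs => ?_
  rw [mul_assoc, ← pow_succ, show d - 1 - s + 1 = d - s by have := mem_range.1 hs; omega]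

theorem geom_sum₂_mul_left_eq_mul_right (hab : Commute a b) (h : a ^ d = b ^ d) :
    (∑ s ∈ range d, a ^ s * b ^ (d - 1 - s)) * a =
      (∑ s ∈ range d, a ^ s * b ^ (d - 1 - s)) * b := by
  rw [← sub_eq_zero, ← mul_sub, hab.geom_sum₂_mul, h, sub_self]

theorem isIdempotentElem_smul_sum_pow_mul_pow_sub (hab : Commute a b) (ha : a ^ d = 1)
    (hb : b ^ d = 1) :
    IsIdempotentElem ((d : K)⁻¹ • ∑ s ∈ range d, a ^ s * b ^ (d - s)) := by
  rcases Nat.eq_zero_or_pos d with rfl | hd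
  · simp [IsIdempotentElem]
  set S := ∑ s ∈ range d, a ^ s * b ^ (d - 1 - s)
  have hSa := geom_sum₂_mul_left_eq_mul_right hab (ha.trans hb.symm)
  have hSpow (k : ℕ) : S * a ^ k = S * b ^ k := by
    induction k with
    | zero => simp
    | succ k ih =>
      rw [pow_succ, ← mul_assoc, ih, mul_assoc, ← (hab.pow_right k).eq, ← mul_assoc, hSa,
        mul_assoc, ← pow_succ']
  have hSS : S * S = d • (S * b ^ (d - 1)) := by
    rw [mul_sum, sum_congr rfl (g := fun _ => S * b ^ (d - 1)) fun s hs => ?_, sum_const,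
      card_range]
    rw [← mul_assoc, hSpow, mul_assoc, ← pow_add,
      show s + (d - 1 - s) = d - 1 by have := mem_range.1 hs; omega]
  have hbS : Commute b S :=
    Commute.sum_right _ _ _ fun s _ =>
      (hab.symm.pow_right s).mul_right ((Commute.refl b).pow_right _)
  have hSbSb : S * b * (S * b) = d • (S * b) :=
    calc S * b * (S * b) = S * S * b ^ 2 := by
          rw [mul_assoc S b, ← mul_assoc b, hbS.eq]; simp only [mul_assoc, sq]
      _ = d • (S * b ^ (d - 1 + 2)) := by rw [hSS, smul_mul_assoc, mul_assoc, ← pow_add]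
      _ = d • (S * b) := by rw [show d - 1 + 2 = d + 1 by omega, pow_succ, hb, one_mul]
  rw [IsIdempotentElem, sum_pow_mul_pow_sub_eq_geom_sum₂_mul, smul_mul_smul_comm, hSbSb,
    ← Nat.cast_smul_eq_nsmul K, smul_smul]
  congr 1
  simpa using mul_self_mul_inv (d : K)⁻¹

theorem commute_smul_sum_pow_mul_pow_sub (c : K) (hab : Commute a b) (h : a ^ d = b ^ d)
    (hga : SemiconjBy g a b) (hgb : SemiconjBy g b a) :
    Commute g (c • ∑ s ∈ range d, a ^ s * b ^ (d - s)) := by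
  refine Commute.smul_right ?_ c
  have hgS : g * ∑ s ∈ range d, a ^ s * b ^ (d - 1 - s) =
      (∑ s ∈ range d, b ^ s * a ^ (d - 1 - s)) * g :=
    SemiconjBy.finset_sum_right fun s _ => (hga.pow_right s).mul_right (hgb.pow_right _)
  rw [sum_pow_mul_pow_sub_eq_geom_sum₂_mul, Commute, SemiconjBy, ← mul_assoc, hgS,
    ← hab.geom_sum₂_comm, mul_assoc, hgb.eq, ← mul_assoc,
    geom_sum₂_mul_left_eq_mul_right hab h]

theorem isUnit_of_sq_eq_one_add_smul {e : A} {u : K} (hu : u ≠ 0) (he : IsIdempotentElem e)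
    (hge : Commute g e) (hg : g ^ 2 = 1 + (u - 1) • e + (u - 1) • (e * g)) : IsUnit g := by
  set h := g + (u⁻¹ - 1) • e + (u⁻¹ - 1) • (e * g)
  have hegg : e * g ^ 2 = u • e + (u - 1) • (e * g) := by
    rw [hg, mul_add, mul_add, mul_one, mul_smul_comm, mul_smul_comm, he.eq, ← mul_assoc, he.eq]
    module
  have hgh : g * h = 1 := by
    rw [mul_add, mul_add, mul_smul_comm, mul_smul_comm, hge.eq, ← mul_assoc, hge.eq, mul_assoc,
      ← pow_two, hegg, hg]
    match_scalars <;> field_simp <;> ring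
  have hcomm : Commute g h :=
    ((Commute.refl g).add_right (hge.smul_right _)).add_right
      ((hge.mul_right (.refl g)).smul_right _)
  exact ⟨⟨g, h, hgh, hcomm.eq ▸ hgh⟩, rfl⟩

end FramingIdempotent

namespace YokonumaHecke

variable {d n : ℕ} {u : ℂ} {i j : ℕ}

theorem mkAlgHom_eF (i : ℕ) : RingQuot.mkAlgHom ℂ (YHRel d n u) (eF d n i) = ye d n u i := by
  simp [eF, ye, yt, map_sum]

theorem commute_yg_yg (hi : 1 ≤ i) (hij : i + 1 < j) (hj : j ≤ n - 1) :
    Commute (yg d n u i) (yg d n u j) := by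
  simpa [Commute, SemiconjBy, yg] using
    RingQuot.mkAlgHom_rel ℂ (YHRel.g_comm (d := d) (u := u) hi hij hj)

theorem yg_braid (hi : 1 ≤ i) (hi' : i + 1 ≤ n - 1) :
    yg d n u i * yg d n u (i + 1) * yg d n u i =
      yg d n u (i + 1) * yg d n u i * yg d n u (i + 1) := by
  simpa [yg] using RingQuot.mkAlgHom_rel ℂ (YHRel.braid (d := d) (u := u) hi hi')

theorem commute_yt_yt (hi : 1 ≤ i) (hi' : i ≤ n) (hj : 1 ≤ j) (hj' : j ≤ n) :
    Commute (yt d n u i) (yt d n u j) := by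
  simpa [Commute, SemiconjBy, yt] using
    RingQuot.mkAlgHom_rel ℂ (YHRel.t_comm (d := d) (u := u) hi hi' hj hj')

theorem yt_pow_eq_one (hi : 1 ≤ i) (hi' : i ≤ n) : yt d n u i ^ d = 1 := by
  simpa [yt] using RingQuot.mkAlgHom_rel ℂ (YHRel.t_pow (d := d) (u := u) hi hi')

theorem semiconjBy_yg_yt (hi : 1 ≤ i) (hi' : i ≤ n - 1) :
    SemiconjBy (yg d n u i) (yt d n u i) (yt d n u (i + 1)) := by
  simpa [SemiconjBy, yg, yt] using RingQuot.mkAlgHom_rel ℂ (YHRel.g_t (d := d) (u := u) hi hi')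

theorem semiconjBy_yg_yt_succ (hi : 1 ≤ i) (hi' : i ≤ n - 1) :
    SemiconjBy (yg d n u i) (yt d n u (i + 1)) (yt d n u i) := by
  simpa [SemiconjBy, yg, yt] using RingQuot.mkAlgHom_rel ℂ (YHRel.g_t' (d := d) (u := u) hi hi')

theorem commute_yg_yt (hi : 1 ≤ i) (hi' : i ≤ n - 1) (hj : 1 ≤ j) (hj' : j ≤ n)
    (h₁ : j ≠ i) (h₂ : j ≠ i + 1) : Commute (yg d n u i) (yt d n u j) := by
  simpa [Commute, SemiconjBy, yg, yt] using
    RingQuot.mkAlgHom_rel ℂ (YHRel.g_t_comm (d := d) (u := u) hi hi' hj hj' h₁ h₂)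

theorem yg_sq (hi : 1 ≤ i) (hi' : i ≤ n - 1) :
    yg d n u i ^ 2 = 1 + (u - 1) • ye d n u i + (u - 1) • (ye d n u i * yg d n u i) := by
  simpa [← mkAlgHom_eF, yg] using RingQuot.mkAlgHom_rel ℂ (YHRel.quad (d := d) (u := u) hi hi')

theorem ye_isIdempotentElem (hi : 1 ≤ i) (hi' : i + 1 ≤ n) : IsIdempotentElem (ye d n u i) :=
  isIdempotentElem_smul_sum_pow_mul_pow_sub (commute_yt_yt hi (by omega) (by omega) hi')
    (yt_pow_eq_one hi (by omega)) (yt_pow_eq_one (by omega) hi')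

theorem commute_yg_ye (hi : 1 ≤ i) (hi' : i ≤ n - 1) : Commute (yg d n u i) (ye d n u i) :=
  commute_smul_sum_pow_mul_pow_sub _ (commute_yt_yt hi (by omega) (by omega) (by omega))
    ((yt_pow_eq_one hi (by omega)).trans (yt_pow_eq_one (by omega) (by omega)).symm)
    (semiconjBy_yg_yt hi hi') (semiconjBy_yg_yt_succ hi hi')

theorem isUnit_yg (hu : u ≠ 0) (hi : 1 ≤ i) (hi' : i ≤ n - 1) : IsUnit (yg d n u i) :=
  isUnit_of_sq_eq_one_add_smul hu (ye_isIdempotentElem hi (by omega)) (commute_yg_ye hi hi')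
    (yg_sq hi hi')

theorem ygam_eq_prod_range' : ygam d n u = ((List.range' 1 (n - 1)).map (yg d n u)).prod := by
  simp [ygam, List.range'_eq_map_range, add_comm, Function.comp_def]

theorem isUnit_ygam (hu : u ≠ 0) : IsUnit (ygam d n u) := by
  rw [ygam_eq_prod_range']
  refine List.prod_isUnit ?_
  simp only [List.mem_map, List.mem_range'_1]
  rintro _ ⟨k, hk, rfl⟩
  exact isUnit_yg hu hk.1 (by omega)

theorem semiconjBy_ygam_of_block {x y : YH d n u} (a b : ℕ) (hab : a + b ≤ n - 1)
    (hleft : ∀ k, 1 ≤ k → k ≤ a → Commute (yg d n u k) y)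
    (hblock : SemiconjBy ((List.range' (a + 1) b).map (yg d n u)).prod x y)
    (hright : ∀ k, a + b < k → k ≤ n - 1 → Commute (yg d n u k) x) :
    SemiconjBy (ygam d n u) x y := by
  have hsplit : List.range' 1 (n - 1) =
      List.range' 1 a ++ List.range' (a + 1) b ++ List.range' (a + b + 1) (n - 1 - a - b) := by
    rw [show a + b + 1 = 1 + 1 * (a + b) by omega, show a + 1 = 1 + 1 * a by omega,
      List.range'_append, List.range'_append]
    congr 1
    omega
  rw [ygam_eq_prod_range', hsplit, List.map_append, List.map_append, List.prod_append,
    List.prod_append]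
  refine (SemiconjBy.mul_left ?_ hblock).mul_left ?_
  · refine Commute.list_prod_left _ _ fun z hz => ?_
    simp only [List.mem_map, List.mem_range'_1] at hz
    obtain ⟨k, hk, rfl⟩ := hz
    exact hleft k hk.1 (by omega)
  · refine Commute.list_prod_left _ _ fun z hz => ?_
    simp only [List.mem_map, List.mem_range'_1] at hz
    obtain ⟨k, hk, rfl⟩ := hz
    exact hright k (by omega) (by omega)

theorem semiconjBy_ygam_yt (hi : 1 ≤ i) (hi' : i ≤ n - 1) :
    SemiconjBy (ygam d n u) (yt d n u i) (yt d n u (i + 1)) := by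
  refine semiconjBy_ygam_of_block (i - 1) 1 (by omega) (fun k hk hk' => ?_) ?_
    (fun k hk hk' => ?_)
  · exact commute_yg_yt hk (by omega) (by omega) (by omega) (by omega) (by omega)
  · simpa [show i - 1 + 1 = i by omega] using semiconjBy_yg_yt hi hi'
  · exact commute_yg_yt (by omega) hk' hi (by omega) (by omega) (by omega)

theorem semiconjBy_ygam_yg (hi : 1 ≤ i) (hi' : i ≤ n - 2) :
    SemiconjBy (ygam d n u) (yg d n u i) (yg d n u (i + 1)) := by
  refine semiconjBy_ygam_of_block (i - 1) 2 (by omega) (fun k hk hk' => ?_) ?_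
    (fun k hk hk' => ?_)
  · exact commute_yg_yg hk (by omega) (by omega)
  · simpa [show i - 1 + 1 = i by omega, SemiconjBy, List.range'_succ, mul_assoc] using
      yg_braid hi (by omega)
  · exact (commute_yg_yg (j := k) hi (by omega) hk').symm

theorem semiconjBy_ygam_ye (hi : 1 ≤ i) (hi' : i ≤ n - 2) :
    SemiconjBy (ygam d n u) (ye d n u i) (ye d n u (i + 1)) := by
  unfold ye
  exact (SemiconjBy.finset_sum_right fun _ _ =>
    ((semiconjBy_ygam_yt hi (by omega)).pow_right _).mul_right
      ((semiconjBy_ygam_yt (i := i + 1) (by omega) (by omega)).pow_right _)).smul_right _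

theorem semiconjBy_ygam_ygSt (hi : 1 ≤ i) (hi' : i ≤ n - 3) :
    SemiconjBy (ygam d n u) (ygSt d n u i) (ygSt d n u (i + 1)) := by
  have h₁ := semiconjBy_ygam_yg (d := d) (n := n) (u := u) hi (by omega)
  have h₂ := semiconjBy_ygam_yg (d := d) (n := n) (u := u) (i := i + 1) (by omega) (by omega)
  exact (((((SemiconjBy.one_right _).add_right h₁).add_right h₂).add_right
    (h₁.mul_right h₂)).add_right (h₂.mul_right h₁)).add_right ((h₁.mul_right h₂).mul_right h₁)

theorem semiconjBy_ygam_yr (hi : 1 ≤ i) (hi' : i ≤ n - 3) :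
    SemiconjBy (ygam d n u) (yr d n u i) (yr d n u (i + 1)) :=
  ((semiconjBy_ygam_ye hi (by omega)).mul_right
    (semiconjBy_ygam_ye (i := i + 1) (by omega) (by omega))).mul_right (semiconjBy_ygam_ygSt hi hi')

theorem semiconjBy_ygam_pow_yr (k : ℕ) (hk : k + 1 ≤ n - 2) :
    SemiconjBy (ygam d n u ^ k) (yr d n u 1) (yr d n u (k + 1)) := by
  induction k with
  | zero => simp
  | succ k ih =>
    rw [pow_succ']
    exact (semiconjBy_ygam_yr (by omega) (by omega)).mul_left (ih (by omega))

end YokonumaHecke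

open YokonumaHecke

theorem stmt4_general (d n : ℕ) (u : ℂ) (hu : u ≠ 0) :
    (∀ j : ℕ, 1 ≤ j → j ≤ n - 2 →
      TwoSidedIdeal.span {a : YH d n u | ∃ i : ℕ, 1 ≤ i ∧ i ≤ n - 2 ∧ a = yr d n u i} =
        TwoSidedIdeal.span {yr d n u j}) ∧
    (∀ i : ℕ, 1 ≤ i → i ≤ n - 2 →
      ygam d n u ^ (i - 1) * yr d n u 1 = yr d n u i * ygam d n u ^ (i - 1)) := by
  have hconj (i : ℕ) (hi : 1 ≤ i) (hi' : i ≤ n - 2) :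
      SemiconjBy (ygam d n u ^ (i - 1)) (yr d n u 1) (yr d n u i) := by
    simpa [Nat.sub_add_cancel hi] using
      semiconjBy_ygam_pow_yr (d := d) (u := u) (i - 1) (by omega)
  have hspan (i : ℕ) (hi : 1 ≤ i) (hi' : i ≤ n - 2) :
      TwoSidedIdeal.span {yr d n u i} = TwoSidedIdeal.span {yr d n u 1} :=
    (TwoSidedIdeal.span_singleton_eq_of_semiconjBy ((isUnit_ygam hu).pow _) (hconj i hi hi')).symm
  refine ⟨fun j hj hj' => le_antisymm ?_ ?_, hconj⟩
  · rw [TwoSidedIdeal.span_le]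
    rintro _ ⟨i, hi, hi', rfl⟩
    rw [SetLike.mem_coe, hspan j hj hj', ← hspan i hi hi']
    exact TwoSidedIdeal.subset_span rfl
  · exact TwoSidedIdeal.span_mono (Set.singleton_subset_iff.2 ⟨j, hj, hj', rfl⟩)

/-- In `Y_{d,n}(u)`, for each fixed `1 ≤ j ≤ n-2`, the two-sided ideal
generated by `{r_{i,i+1} : 1 ≤ i ≤ n-2}` equals the two-sided ideal generated by the
single element `r_{j,j+1}`; moreover `γ^{i-1} r_{1,2} = r_{i,i+1} γ^{i-1}` for all
`1 ≤ i ≤ n-2`, where `γ = g_1 ⋯ g_{n-1}`. -/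
theorem stmt4 (d n : ℕ) (hd : 1 ≤ d) (hn : 3 ≤ n) (u : ℂ) (hu : u ≠ 0) :
    (∀ j : ℕ, 1 ≤ j → j ≤ n - 2 →
      TwoSidedIdeal.span {a : YH d n u | ∃ i : ℕ, 1 ≤ i ∧ i ≤ n - 2 ∧ a = yr d n u i} =
        TwoSidedIdeal.span {yr d n u j}) ∧
    (∀ i : ℕ, 1 ≤ i → i ≤ n - 2 →
      ygam d n u ^ (i - 1) * yr d n u 1 = yr d n u i * ygam d n u ^ (i - 1)) :=
  stmt4_general d n u hu
end
end

section
/- Assume u ∉ {0, −1}. Let A be the unital associative ℂ-algebra presented by generators ℓ_1,…,ℓ_{n−1}, t_1,…,t_n subject to the relations: t_i^d = 1; t_i t_j = t_j t_i; ℓ_i t_j = t_j ℓ_i for j ∉ {i, i+1}; ℓ_i ℓ_j = ℓ_j ℓ_i for |i−j| > 1; ℓ_i t_i = t_{i+1} ℓ_i + (1/(u+1))(t_i − t_{i+1}); ℓ_i t_{i+1} = t_i ℓ_i + (1/(u+1))(t_{i+1} − t_i); ℓ_i² = (((u−1)e_i + 2)/(u+1)) ℓ_i; ℓ_i ℓ_{i+1}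 ℓ_i − (((u−1)e_i + 1)/(u+1)²) ℓ_i = ℓ_{i+1} ℓ_i ℓ_{i+1} − (((u−1)e_{i+1} + 1)/(u+1)²) ℓ_{i+1}; and e_i e_{i+1} ℓ_i ℓ_{i+1} ℓ_i = (u/(u+1)²) e_i e_{i+1} ℓ_i, where e_i := (1/d) Σ_{s=0}^{d−1} t_i^s t_{i+1}^{d−s} in A. Then the assignment g_i ↦ (u+1)ℓ_i − 1, t_j ↦ t_j induces a well-defined ℂ-algebra isomorphism from FTL_{d,n}(u) onto A. -/
noncomputable section

open scoped BigOperators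

/-- The relation defining `FTL_{d,n}(u)` as a quotient of `Y_{d,n}(u)`:
kill the elements `r_{i,i+1}`, `1 ≤ i ≤ n-2`. -/
inductive FTLRel (d n : ℕ) (u : ℂ) : YH d n u → YH d n u → Prop
  | mk {i : ℕ} (h1 : 1 ≤ i) (h2 : i ≤ n - 2) : FTLRel d n u (yr d n u i) 0

/-- The Framization of the Temperley–Lieb algebra `FTL_{d,n}(u)`: the quotient of
`Y_{d,n}(u)` by the two-sided ideal generated by the `r_{i,i+1}`. -/
abbrev FTL (d n : ℕ) (u : ℂ) := RingQuot (FTLRel d n u)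

/-- The defining relations of the presented algebra `A` with generators
`ℓ_1, …, ℓ_{n-1}, t_1, …, t_n` (here `gF` plays the role of `ℓ` and `tF` of `t`). -/
inductive ARel (d n : ℕ) (u : ℂ) : YHFree n → YHFree n → Prop
  | t_pow {i : ℕ} (hi : 1 ≤ i) (hi' : i ≤ n) : ARel d n u (tF n i ^ d) 1
  | t_comm {i j : ℕ} (hi : 1 ≤ i) (hi' : i ≤ n) (hj : 1 ≤ j) (hj' : j ≤ n) :
      ARel d n u (tF n i * tF n j) (tF n j * tF n i)
  | l_t_comm {i j : ℕ} (hi : 1 ≤ i) (hi' : i ≤ n - 1) (hj : 1 ≤ j) (hj' : j ≤ n)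
      (h1 : j ≠ i) (h2 : j ≠ i + 1) :
      ARel d n u (gF n i * tF n j) (tF n j * gF n i)
  | l_comm {i j : ℕ} (hi : 1 ≤ i) (hij : i + 1 < j) (hj : j ≤ n - 1) :
      ARel d n u (gF n i * gF n j) (gF n j * gF n i)
  | l_t {i : ℕ} (hi : 1 ≤ i) (hi' : i ≤ n - 1) :
      ARel d n u (gF n i * tF n i)
        (tF n (i + 1) * gF n i + (u + 1)⁻¹ • (tF n i - tF n (i + 1)))
  | l_t' {i : ℕ} (hi : 1 ≤ i) (hi' : i ≤ n - 1) :
      ARel d n u (gF n i * tF n (i + 1))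
        (tF n i * gF n i + (u + 1)⁻¹ • (tF n (i + 1) - tF n i))
  | sq {i : ℕ} (hi : 1 ≤ i) (hi' : i ≤ n - 1) :
      ARel d n u (gF n i ^ 2)
        ((u + 1)⁻¹ • (((u - 1) • eF d n i + 2) * gF n i))
  | cubic {i : ℕ} (hi : 1 ≤ i) (hi' : i ≤ n - 2) :
      ARel d n u
        (gF n i * gF n (i + 1) * gF n i -
          ((u + 1) ^ 2)⁻¹ • (((u - 1) • eF d n i + 1) * gF n i))
        (gF n (i + 1) * gF n i * gF n (i + 1) -
          ((u + 1) ^ 2)⁻¹ • (((u - 1) • eF d n (i + 1) + 1) * gF n (i + 1)))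
  | tl {i : ℕ} (hi : 1 ≤ i) (hi' : i ≤ n - 2) :
      ARel d n u
        (eF d n i * eF d n (i + 1) * (gF n i * gF n (i + 1) * gF n i))
        ((u * ((u + 1) ^ 2)⁻¹) • (eF d n i * eF d n (i + 1) * gF n i))

/-- The presented algebra `A` of Statement 6. -/
abbrev AAlg (d n : ℕ) (u : ℂ) := RingQuot (ARel d n u)

/-- The generator `ℓ_i` of `A` (1-based). -/
def lA (d n : ℕ) (u : ℂ) (i : ℕ) : AAlg d n u :=
  RingQuot.mkAlgHom ℂ (ARel d n u) (gF n i)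

/-- The generator `t_j` of `A` (1-based). -/
def tA (d n : ℕ) (u : ℂ) (j : ℕ) : AAlg d n u :=
  RingQuot.mkAlgHom ℂ (ARel d n u) (tF n j)

/-!
Substituting `g_i = (u + 1) ℓ_i - 1`, every defining relation of `FTL_{d,n}(u)` becomes a nonzero
multiple of the corresponding relation of `A`, once the quadratic relation is available:
* `g_i² - (1 + (u - 1) e_i + (u - 1) e_i g_i)`
    `= (u + 1)² (ℓ_i² - ((u - 1) e_i + 2) ℓ_i / (u + 1))`;
* the two sides of the braid relation differ by `(u + 1)³` times the difference of the two sides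
  of the cubic relation;
* as `e_i e_{i+1} ℓ_i² = e_i e_{i+1} ℓ_i`, one has `e_i e_{i+1} g_{i,i+1}`
    `= (u + 1)³ (e_i e_{i+1} ℓ_i ℓ_{i+1} ℓ_i - u / (u + 1)² · e_i e_{i+1} ℓ_i)`.
As `u + 1 ≠ 0` the two sets of relations are equivalent, so the universal properties of the two
presentations give mutually inverse algebra maps.
-/

section FrameIdem

variable {R : Type*} [Semiring R] [Algebra ℂ R] {d : ℕ}

def frameIdem (d : ℕ) (x y : R) : R :=
  (d : ℂ)⁻¹ • ∑ s ∈ Finset.range d, x ^ s * y ^ (d - s)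

theorem eF_eq_frameIdem (n i : ℕ) : eF d n i = frameIdem d (tF n i) (tF n (i + 1)) := rfl

theorem ye_eq_frameIdem (d n : ℕ) (u : ℂ) (i : ℕ) :
    ye d n u i = frameIdem d (yt d n u i) (yt d n u (i + 1)) := rfl

theorem AlgHom.map_frameIdem {S : Type*} [Semiring S] [Algebra ℂ S] (f : R →ₐ[ℂ] S)
    (x y : R) :
    f (frameIdem d x y) = frameIdem d (f x) (f y) := by
  simp only [frameIdem, map_smul, map_sum, map_mul, map_pow]

theorem Commute.frameIdem {x y z w : R} (hxz : Commute x z) (hxw : Commute x w)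
    (hyz : Commute y z) (hyw : Commute y w) :
    Commute (frameIdem d x y) (frameIdem d z w) :=
  .smul_left (.smul_right (.sum_left _ _ _ fun _ _ => .sum_right _ _ _ fun _ _ =>
    ((hxz.pow_pow _ _).mul_right (hxw.pow_pow _ _)).mul_left
      ((hyz.pow_pow _ _).mul_right (hyw.pow_pow _ _))) _) _

end FrameIdem

section FrameIdemRing

variable {R : Type*} [Ring R] [Algebra ℂ R] {d : ℕ}

theorem isIdempotentElem_smul_geom_sum {z : R} (hz : z ^ d = 1) :
    IsIdempotentElem ((d : ℂ)⁻¹ • ∑ s ∈ Finset.range d, z ^ s) := by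
  set S := ∑ s ∈ Finset.range d, z ^ s
  have hSz : S * z = S := by
    have h := geom_sum_mul z d
    rwa [hz, sub_self, mul_sub, mul_one, sub_eq_zero] at h
  have hSpow (k : ℕ) : S * z ^ k = S := by
    induction k with
    | zero => rw [pow_zero, mul_one]
    | succ k ih => rw [pow_succ, ← mul_assoc, ih, hSz]
  have hSS : S * S = (d : ℂ) • S := by
    rw [Finset.mul_sum, Finset.sum_congr rfl fun k _ => hSpow k, Finset.sum_const,
      Finset.card_range, Nat.cast_smul_eq_nsmul]
  rw [IsIdempotentElem, smul_mul_smul_comm, hSS, smul_smul]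
  congr 1
  simpa using mul_self_mul_inv ((d : ℂ)⁻¹)

-- `y ^ (d - 1)` inverts `y`, so `frameIdem d x y` averages the powers of `x y⁻¹`.
theorem frameIdem_eq_smul_geom_sum {x y : R} (hxy : Commute x y) (hy : y ^ d = 1) :
    frameIdem d x y = (d : ℂ)⁻¹ • ∑ s ∈ Finset.range d, (x * y ^ (d - 1)) ^ s := by
  refine congrArg _ (Finset.sum_congr rfl fun s hs => ?_)
  rw [(hxy.pow_right _).mul_pow, ← pow_mul]
  rcases Nat.eq_zero_or_pos s with rfl | hs0
  · simp [hy]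
  · have hsd := Finset.mem_range.1 hs
    have hexp : (d - 1) * s = (d - s) + d * (s - 1) := by
      zify [(by omega : 1 ≤ d), hsd.le, (by omega : 1 ≤ s)]
      ring
    rw [hexp, pow_add, pow_mul, hy, one_pow, mul_one]

theorem isIdempotentElem_frameIdem {x y : R} (hxy : Commute x y) (hx : x ^ d = 1)
    (hy : y ^ d = 1) : IsIdempotentElem (frameIdem d x y) := by
  rw [frameIdem_eq_smul_geom_sum hxy hy]
  refine isIdempotentElem_smul_geom_sum ?_
  rw [(hxy.pow_right _).mul_pow, ← pow_mul, mul_comm, pow_mul, hy, one_pow, mul_one, hx]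

theorem frameIdem_mul_frameIdem_mul_frameIdem {x y z : R} (hxy : Commute x y)
    (hxz : Commute x z) (hyz : Commute y z) (hx : x ^ d = 1) (hy : y ^ d = 1) :
    frameIdem d x y * frameIdem d y z * frameIdem d x y =
      frameIdem d x y * frameIdem d y z := by
  rw [mul_assoc, ← (hxy.frameIdem hxz (Commute.refl y) hyz).eq, ← mul_assoc,
    (isIdempotentElem_frameIdem hxy hx hy).eq]

end FrameIdemRing

section Steinberg

variable {K R : Type*} [CommSemiring K] [Semiring R] [Algebra K R]

def steinbergElem (a b : R) : R := 1 + a + b + a * b + b * a + a * b * a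

theorem ygSt_eq_steinbergElem (d n : ℕ) (u : ℂ) (i : ℕ) :
    ygSt d n u i = steinbergElem (yg d n u i) (yg d n u (i + 1)) := rfl

theorem AlgHom.map_steinbergElem {S : Type*} [Semiring S] [Algebra K S] (f : R →ₐ[K] S)
    (a b : R) :
    f (steinbergElem a b) = steinbergElem (f a) (f b) := by
  simp only [steinbergElem, map_add, map_mul, map_one]

end Steinberg

section Transport

variable {K R : Type*} [Field K] [Ring R] [Algebra K R] {u : K}

theorem commute_smul_sub_one_left_iff {c : K} (hc : c ≠ 0) {a x : R} :
    Commute (c • a - 1) x ↔ Commute a x := by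
  have key : (c • a - 1) * x - x * (c • a - 1) = c • (a * x - x * a) := by
    simp only [sub_mul, mul_sub, smul_mul_assoc, mul_smul_comm, one_mul, mul_one, smul_sub]
    abel
  simp only [Commute, SemiconjBy]
  rw [← sub_eq_zero, key, smul_eq_zero_iff_right hc, sub_eq_zero]

theorem commute_smul_sub_one_iff {c : K} (hc : c ≠ 0) {a b : R} :
    Commute (c • a - 1) (c • b - 1) ↔ Commute a b :=
  (commute_smul_sub_one_left_iff hc).trans <| Commute.symm_iff.trans <|
    (commute_smul_sub_one_left_iff hc).trans Commute.symm_iff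

theorem smul_sub_one_mul_eq_mul_iff {c : K} (hc : c ≠ 0) {a x y : R} :
    (c • a - 1) * x = y * (c • a - 1) ↔ a * x = y * a + c⁻¹ • (x - y) := by
  have key : (c • a - 1) * x - y * (c • a - 1) = c • (a * x - (y * a + c⁻¹ • (x - y))) := by
    simp only [sub_mul, mul_sub, smul_mul_assoc, mul_smul_comm, one_mul, mul_one, smul_sub,
      smul_add, smul_smul, mul_inv_cancel₀ hc, one_smul]
    abel
  rw [← sub_eq_zero, key, smul_eq_zero_iff_right hc, sub_eq_zero]

theorem smul_sub_one_sq_eq_iff (hu : u + 1 ≠ 0) {a e : R} :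
    ((u + 1) • a - 1) ^ 2 = 1 + (u - 1) • e + (u - 1) • (e * ((u + 1) • a - 1)) ↔
      a ^ 2 = (u + 1)⁻¹ • (((u - 1) • e + 2) * a) := by
  have key : ((u + 1) • a - 1) ^ 2 - (1 + (u - 1) • e + (u - 1) • (e * ((u + 1) • a - 1))) =
      (u + 1) ^ 2 • (a ^ 2 - (u + 1)⁻¹ • (((u - 1) • e + 2) * a)) := by
    rw [sq, sq a]
    simp only [sub_mul, mul_sub, add_mul, smul_mul_assoc, mul_smul_comm, one_mul, mul_one,
      smul_sub, smul_add, smul_smul, ← one_add_one_eq_two]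
    match_scalars <;> field_simp <;> ring
  rw [← sub_eq_zero, key, smul_eq_zero_iff_right (pow_ne_zero 2 hu), sub_eq_zero]

theorem smul_sub_one_braid_iff (hu : u + 1 ≠ 0) {a b ea eb : R}
    (ha : a ^ 2 = (u + 1)⁻¹ • (((u - 1) • ea + 2) * a))
    (hb : b ^ 2 = (u + 1)⁻¹ • (((u - 1) • eb + 2) * b)) :
    ((u + 1) • a - 1) * ((u + 1) • b - 1) * ((u + 1) • a - 1) =
        ((u + 1) • b - 1) * ((u + 1) • a - 1) * ((u + 1) • b - 1) ↔
      a * b * a - ((u + 1) ^ 2)⁻¹ • (((u - 1) • ea + 1) * a) =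
        b * a * b - ((u + 1) ^ 2)⁻¹ • (((u - 1) • eb + 1) * b) := by
  rw [sq] at ha hb
  have key : ((u + 1) • a - 1) * ((u + 1) • b - 1) * ((u + 1) • a - 1) -
        ((u + 1) • b - 1) * ((u + 1) • a - 1) * ((u + 1) • b - 1) =
      (u + 1) ^ 3 • (a * b * a - ((u + 1) ^ 2)⁻¹ • (((u - 1) • ea + 1) * a) -
        (b * a * b - ((u + 1) ^ 2)⁻¹ • (((u - 1) • eb + 1) * b))) := by
    simp only [sub_mul, mul_sub, add_mul, smul_mul_assoc, mul_smul_comm, one_mul, mul_one,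
      smul_sub, smul_add, smul_smul, ha, hb, ← one_add_one_eq_two]
    match_scalars <;> field_simp <;> ring
  rw [← sub_eq_zero, key, smul_eq_zero_iff_right (pow_ne_zero 3 hu), sub_eq_zero]

theorem mul_steinbergElem_smul_sub_one_eq_zero_iff (hu : u + 1 ≠ 0) {a b e c : R}
    (ha : a ^ 2 = (u + 1)⁻¹ • (((u - 1) • e + 2) * a)) (hce : c * e = c) :
    c * steinbergElem ((u + 1) • a - 1) ((u + 1) • b - 1) = 0 ↔
      c * (a * b * a) = (u * ((u + 1) ^ 2)⁻¹) • (c * a) := by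
  have hca : c * (a * a) = c * a := by
    rw [← sq, ha, mul_smul_comm, ← mul_assoc]
    simp only [mul_add, add_mul, mul_smul_comm, smul_mul_assoc, hce, ← one_add_one_eq_two,
      mul_one]
    match_scalars; field_simp; ring
  have key : c * steinbergElem ((u + 1) • a - 1) ((u + 1) • b - 1) =
      (u + 1) ^ 3 • (c * (a * b * a) - (u * ((u + 1) ^ 2)⁻¹) • (c * a)) := by
    simp only [steinbergElem, sub_mul, mul_sub, add_mul, mul_add, smul_mul_assoc, mul_smul_comm,
      one_mul, mul_one, smul_sub, smul_smul, hca, ← mul_assoc]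
    match_scalars <;> field_simp <;> ring
  rw [key, smul_eq_zero_iff_right (pow_ne_zero 3 hu), sub_eq_zero]

end Transport

section Families

variable {R : Type*} [Ring R] [Algebra ℂ R] (d n : ℕ) (u : ℂ)

structure IsFramingFamily (t : ℕ → R) : Prop where
  t_pow : ∀ {i}, 1 ≤ i → i ≤ n → t i ^ d = 1
  t_comm : ∀ {i j}, 1 ≤ i → i ≤ n → 1 ≤ j → j ≤ n → Commute (t i) (t j)

structure IsFTLFamily (g t : ℕ → R) : Prop extends IsFramingFamily d n t where
  g_comm : ∀ {i j}, 1 ≤ i → i + 1 < j → j ≤ n - 1 → Commute (g i) (g j)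
  braid : ∀ {i}, 1 ≤ i → i + 1 ≤ n - 1 →
    g i * g (i + 1) * g i = g (i + 1) * g i * g (i + 1)
  g_t : ∀ {i}, 1 ≤ i → i ≤ n - 1 → g i * t i = t (i + 1) * g i
  g_t' : ∀ {i}, 1 ≤ i → i ≤ n - 1 → g i * t (i + 1) = t i * g i
  g_t_comm : ∀ {i j}, 1 ≤ i → i ≤ n - 1 → 1 ≤ j → j ≤ n → j ≠ i → j ≠ i + 1 →
    Commute (g i) (t j)
  quad : ∀ {i}, 1 ≤ i → i ≤ n - 1 →
    g i ^ 2 = 1 + (u - 1) • frameIdem d (t i) (t (i + 1)) +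
      (u - 1) • (frameIdem d (t i) (t (i + 1)) * g i)
  steinberg : ∀ {i}, 1 ≤ i → i ≤ n - 2 →
    frameIdem d (t i) (t (i + 1)) * frameIdem d (t (i + 1)) (t (i + 1 + 1)) *
      steinbergElem (g i) (g (i + 1)) = 0

structure IsAFamily (l t : ℕ → R) : Prop extends IsFramingFamily d n t where
  l_t_comm : ∀ {i j}, 1 ≤ i → i ≤ n - 1 → 1 ≤ j → j ≤ n → j ≠ i → j ≠ i + 1 →
    Commute (l i) (t j)
  l_comm : ∀ {i j}, 1 ≤ i → i + 1 < j → j ≤ n - 1 → Commute (l i) (l j)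
  l_t : ∀ {i}, 1 ≤ i → i ≤ n - 1 →
    l i * t i = t (i + 1) * l i + (u + 1)⁻¹ • (t i - t (i + 1))
  l_t' : ∀ {i}, 1 ≤ i → i ≤ n - 1 →
    l i * t (i + 1) = t i * l i + (u + 1)⁻¹ • (t (i + 1) - t i)
  sq : ∀ {i}, 1 ≤ i → i ≤ n - 1 →
    l i ^ 2 = (u + 1)⁻¹ • (((u - 1) • frameIdem d (t i) (t (i + 1)) + 2) * l i)
  cubic : ∀ {i}, 1 ≤ i → i ≤ n - 2 →
    l i * l (i + 1) * l i -
        ((u + 1) ^ 2)⁻¹ • (((u - 1) • frameIdem d (t i) (t (i + 1)) + 1) * l i) =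
      l (i + 1) * l i * l (i + 1) -
        ((u + 1) ^ 2)⁻¹ •
          (((u - 1) • frameIdem d (t (i + 1)) (t (i + 1 + 1)) + 1) * l (i + 1))
  tl : ∀ {i}, 1 ≤ i → i ≤ n - 2 →
    frameIdem d (t i) (t (i + 1)) * frameIdem d (t (i + 1)) (t (i + 1 + 1)) *
        (l i * l (i + 1) * l i) =
      (u * ((u + 1) ^ 2)⁻¹) •
        (frameIdem d (t i) (t (i + 1)) * frameIdem d (t (i + 1)) (t (i + 1 + 1)) * l i)

variable {d n u}

theorem IsFramingFamily.frameIdem_mul_frameIdem_mul_frameIdem {t : ℕ → R}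
    (h : IsFramingFamily d n t) {i : ℕ} (hi : 1 ≤ i) (hi' : i ≤ n - 2) :
    frameIdem d (t i) (t (i + 1)) * frameIdem d (t (i + 1)) (t (i + 1 + 1)) *
        frameIdem d (t i) (t (i + 1)) =
      frameIdem d (t i) (t (i + 1)) * frameIdem d (t (i + 1)) (t (i + 1 + 1)) :=
  _root_.frameIdem_mul_frameIdem_mul_frameIdem (h.t_comm hi (by omega) (by omega) (by omega))
    (h.t_comm hi (by omega) (by omega) (by omega))
    (h.t_comm (by omega) (by omega) (by omega) (by omega))
    (h.t_pow hi (by omega)) (h.t_pow (by omega) (by omega))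

theorem isFTLFamily_smul_sub_one_iff (hu : u + 1 ≠ 0) {l t : ℕ → R} :
    IsFTLFamily d n u (fun i => (u + 1) • l i - 1) t ↔ IsAFamily d n u l t := by
  constructor
  · intro h
    have sq {i : ℕ} (hi : 1 ≤ i) (hi' : i ≤ n - 1) :=
      (smul_sub_one_sq_eq_iff hu).1 (h.quad hi hi')
    exact
      { toIsFramingFamily := h.toIsFramingFamily
        l_t_comm := fun hi hi' hj hj' h1 h2 =>
          (commute_smul_sub_one_left_iff hu).1 (h.g_t_comm hi hi' hj hj' h1 h2)
        l_comm := fun hi hij hj => (commute_smul_sub_one_iff hu).1 (h.g_comm hi hij hj)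
        l_t := fun hi hi' => (smul_sub_one_mul_eq_mul_iff hu).1 (h.g_t hi hi')
        l_t' := fun hi hi' => (smul_sub_one_mul_eq_mul_iff hu).1 (h.g_t' hi hi')
        sq := sq
        cubic := fun hi hi' => (smul_sub_one_braid_iff hu (sq hi (by omega))
          (sq (by omega) (by omega))).1 (h.braid hi (by omega))
        tl := fun hi hi' => (mul_steinbergElem_smul_sub_one_eq_zero_iff hu (sq hi (by omega))
          (h.frameIdem_mul_frameIdem_mul_frameIdem hi hi')).1 (h.steinberg hi hi') }
  · intro h
    exact
      { toIsFramingFamily := h.toIsFramingFamily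
        g_t_comm := fun hi hi' hj hj' h1 h2 =>
          (commute_smul_sub_one_left_iff hu).2 (h.l_t_comm hi hi' hj hj' h1 h2)
        g_comm := fun hi hij hj => (commute_smul_sub_one_iff hu).2 (h.l_comm hi hij hj)
        g_t := fun hi hi' => (smul_sub_one_mul_eq_mul_iff hu).2 (h.l_t hi hi')
        g_t' := fun hi hi' => (smul_sub_one_mul_eq_mul_iff hu).2 (h.l_t' hi hi')
        quad := fun hi hi' => (smul_sub_one_sq_eq_iff hu).2 (h.sq hi hi')
        braid := fun hi hi' => (smul_sub_one_braid_iff hu (h.sq hi (by omega))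
          (h.sq (by omega) hi')).2 (h.cubic hi (by omega))
        steinberg := fun hi hi' => (mul_steinbergElem_smul_sub_one_eq_zero_iff hu
          (h.sq hi (by omega)) (h.frameIdem_mul_frameIdem_mul_frameIdem hi hi')).2
          (h.tl hi hi') }

end Families

section Presentations

variable {R : Type*} [Ring R] [Algebra ℂ R] {d n : ℕ} {u : ℂ}

def freeLift (n : ℕ) (g t : ℕ → R) : YHFree n →ₐ[ℂ] R :=
  FreeAlgebra.lift ℂ (Sum.elim (fun i => g (i.1 + 1)) (fun j => t (j.1 + 1)))

theorem gF_succ_eq_ι (i : Fin (n - 1)) : gF n (i + 1) = FreeAlgebra.ι ℂ (Sum.inl i) := by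
  rw [gF, dif_pos ⟨by omega, by omega⟩]
  rfl

theorem tF_succ_eq_ι (j : Fin n) : tF n (j + 1) = FreeAlgebra.ι ℂ (Sum.inr j) := by
  rw [tF, dif_pos ⟨by omega, by omega⟩]
  rfl

theorem freeLift_gF {g t : ℕ → R} {i : ℕ} (hi : 1 ≤ i) (hi' : i ≤ n - 1) :
    freeLift n g t (gF n i) = g i := by
  obtain ⟨i, rfl⟩ : ∃ k, i = k + 1 := ⟨i - 1, by omega⟩
  rw [gF_succ_eq_ι ⟨i, by omega⟩, freeLift, FreeAlgebra.lift_ι_apply, Sum.elim_inl]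

theorem freeLift_tF {g t : ℕ → R} {j : ℕ} (hj : 1 ≤ j) (hj' : j ≤ n) :
    freeLift n g t (tF n j) = t j := by
  obtain ⟨j, rfl⟩ : ∃ k, j = k + 1 := ⟨j - 1, by omega⟩
  rw [tF_succ_eq_ι ⟨j, by omega⟩, freeLift, FreeAlgebra.lift_ι_apply, Sum.elim_inr]

theorem freeLift_eF {g t : ℕ → R} {i : ℕ} (hi : 1 ≤ i) (hi' : i + 1 ≤ n) :
    freeLift n g t (eF d n i) = frameIdem d (t i) (t (i + 1)) := by
  rw [eF_eq_frameIdem, AlgHom.map_frameIdem, freeLift_tF hi (by omega), freeLift_tF (by omega) hi']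

theorem freeAlgHom_ext {S : Type*} [Semiring S] [Algebra ℂ S] {f f' : YHFree n →ₐ[ℂ] S}
    (hg : ∀ i, 1 ≤ i → i ≤ n - 1 → f (gF n i) = f' (gF n i))
    (ht : ∀ j, 1 ≤ j → j ≤ n → f (tF n j) = f' (tF n j)) : f = f' := by
  refine FreeAlgebra.hom_ext (funext fun x => ?_)
  rcases x with i | j
  · simpa only [Function.comp_apply, gF_succ_eq_ι] using hg (i + 1) (by omega) (by omega)
  · simpa only [Function.comp_apply, tF_succ_eq_ι] using ht (j + 1) (by omega) (by omega)

namespace IsFTLFamily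

variable {g t : ℕ → R}

theorem freeLift_eq_of_yhRel (h : IsFTLFamily d n u g t) {x y : YHFree n}
    (hxy : YHRel d n u x y) : freeLift n g t x = freeLift n g t y := by
  cases hxy with
  | g_comm hi hij hj =>
    simpa (disch := omega) only [map_mul, freeLift_gF] using (h.g_comm hi hij hj).eq
  | braid hi hi' => simpa (disch := omega) only [map_mul, freeLift_gF] using h.braid hi hi'
  | t_comm hi hi' hj hj' =>
    simpa (disch := omega) only [map_mul, freeLift_tF] using (h.t_comm hi hi' hj hj').eq
  | t_pow hi hi' =>
    simpa (disch := omega) only [map_pow, map_one, freeLift_tF] using h.t_pow hi hi'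
  | g_t hi hi' =>
    simpa (disch := omega) only [map_mul, freeLift_gF, freeLift_tF] using h.g_t hi hi'
  | g_t' hi hi' =>
    simpa (disch := omega) only [map_mul, freeLift_gF, freeLift_tF] using h.g_t' hi hi'
  | g_t_comm hi hi' hj hj' h1 h2 =>
    simpa (disch := omega) only [map_mul, freeLift_gF, freeLift_tF] using
      (h.g_t_comm hi hi' hj hj' h1 h2).eq
  | quad hi hi' =>
    simpa (disch := omega) only [map_pow, map_add, map_one, map_smul, map_mul, freeLift_gF,
      freeLift_eF] using h.quad hi hi'

def liftYH (h : IsFTLFamily d n u g t) : YH d n u →ₐ[ℂ] R :=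
  RingQuot.liftAlgHom ℂ ⟨freeLift n g t, fun _ _ => h.freeLift_eq_of_yhRel⟩

theorem liftYH_mk (h : IsFTLFamily d n u g t) (x : YHFree n) :
    h.liftYH (RingQuot.mkAlgHom ℂ (YHRel d n u) x) = freeLift n g t x :=
  RingQuot.liftAlgHom_mkAlgHom_apply ℂ _ _ x

theorem liftYH_eq_of_ftlRel (h : IsFTLFamily d n u g t) {x y : YH d n u}
    (hxy : FTLRel d n u x y) : h.liftYH x = h.liftYH y := by
  obtain ⟨hi, hi'⟩ := hxy
  simpa (disch := omega) only [yr, ye_eq_frameIdem, ygSt_eq_steinbergElem, map_mul, map_zero,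
    AlgHom.map_frameIdem, AlgHom.map_steinbergElem, yt, yg, liftYH_mk, freeLift_gF,
    freeLift_tF] using h.steinberg hi hi'

end IsFTLFamily

def FTL.lift {g t : ℕ → R} (h : IsFTLFamily d n u g t) : FTL d n u →ₐ[ℂ] R :=
  RingQuot.liftAlgHom ℂ ⟨h.liftYH, fun _ _ => h.liftYH_eq_of_ftlRel⟩

theorem FTL.lift_yg {g t : ℕ → R} (h : IsFTLFamily d n u g t) {i : ℕ} (hi : 1 ≤ i)
    (hi' : i ≤ n - 1) : FTL.lift h (RingQuot.mkAlgHom ℂ (FTLRel d n u) (yg d n u i)) = g i := by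
  rw [FTL.lift, RingQuot.liftAlgHom_mkAlgHom_apply, yg, IsFTLFamily.liftYH_mk, freeLift_gF hi hi']

theorem FTL.lift_yt {g t : ℕ → R} (h : IsFTLFamily d n u g t) {j : ℕ} (hj : 1 ≤ j)
    (hj' : j ≤ n) : FTL.lift h (RingQuot.mkAlgHom ℂ (FTLRel d n u) (yt d n u j)) = t j := by
  rw [FTL.lift, RingQuot.liftAlgHom_mkAlgHom_apply, yt, IsFTLFamily.liftYH_mk, freeLift_tF hj hj']

theorem FTL.algHom_ext {S : Type*} [Semiring S] [Algebra ℂ S] {f f' : FTL d n u →ₐ[ℂ] S}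
    (hg : ∀ i, 1 ≤ i → i ≤ n - 1 → f (RingQuot.mkAlgHom ℂ (FTLRel d n u) (yg d n u i)) =
      f' (RingQuot.mkAlgHom ℂ (FTLRel d n u) (yg d n u i)))
    (ht : ∀ j, 1 ≤ j → j ≤ n → f (RingQuot.mkAlgHom ℂ (FTLRel d n u) (yt d n u j)) =
      f' (RingQuot.mkAlgHom ℂ (FTLRel d n u) (yt d n u j))) : f = f' :=
  RingQuot.ringQuot_ext' ℂ _ _ (RingQuot.ringQuot_ext' ℂ _ _ (freeAlgHom_ext hg ht))

theorem isFTLFamily_yg_yt (d n : ℕ) (u : ℂ) :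
    IsFTLFamily d n u (fun i => RingQuot.mkAlgHom ℂ (FTLRel d n u) (yg d n u i))
      (fun j => RingQuot.mkAlgHom ℂ (FTLRel d n u) (yt d n u j)) := by
  have hπ {x y : YHFree n} (hxy : YHRel d n u x y) :
      RingQuot.mkAlgHom ℂ (FTLRel d n u) (RingQuot.mkAlgHom ℂ (YHRel d n u) x) =
        RingQuot.mkAlgHom ℂ (FTLRel d n u) (RingQuot.mkAlgHom ℂ (YHRel d n u) y) :=
    congrArg _ (RingQuot.mkAlgHom_rel ℂ hxy)
  have hg (i : ℕ) : RingQuot.mkAlgHom ℂ (YHRel d n u) (gF n i) = yg d n u i := rfl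
  have ht (j : ℕ) : RingQuot.mkAlgHom ℂ (YHRel d n u) (tF n j) = yt d n u j := rfl
  exact
    { t_pow := fun hi hi' => by simpa only [map_pow, map_one, ht] using hπ (.t_pow hi hi')
      t_comm := fun hi hi' hj hj' => by
        simpa only [commute_iff_eq, map_mul, ht] using hπ (.t_comm hi hi' hj hj')
      g_comm := fun hi hij hj => by
        simpa only [commute_iff_eq, map_mul, hg] using hπ (.g_comm hi hij hj)
      braid := fun hi hi' => by simpa only [map_mul, hg] using hπ (.braid hi hi')
      g_t := fun hi hi' => by simpa only [map_mul, hg, ht] using hπ (.g_t hi hi')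
      g_t' := fun hi hi' => by simpa only [map_mul, hg, ht] using hπ (.g_t' hi hi')
      g_t_comm := fun hi hi' hj hj' h1 h2 => by
        simpa only [commute_iff_eq, map_mul, hg, ht] using hπ (.g_t_comm hi hi' hj hj' h1 h2)
      quad := fun hi hi' => by
        simpa only [map_pow, map_add, map_one, map_smul, map_mul, eF_eq_frameIdem,
          AlgHom.map_frameIdem, hg, ht] using hπ (.quad hi hi')
      steinberg := fun hi hi' => by
        simpa only [yr, ye_eq_frameIdem, ygSt_eq_steinbergElem, map_mul, map_zero,
          AlgHom.map_frameIdem, AlgHom.map_steinbergElem] using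
          RingQuot.mkAlgHom_rel ℂ (FTLRel.mk (d := d) (u := u) hi hi') }

theorem IsAFamily.freeLift_eq_of_aRel {l t : ℕ → R} (h : IsAFamily d n u l t) {x y : YHFree n}
    (hxy : ARel d n u x y) : freeLift n l t x = freeLift n l t y := by
  cases hxy with
  | t_pow hi hi' =>
    simpa (disch := omega) only [map_pow, map_one, freeLift_tF] using h.t_pow hi hi'
  | t_comm hi hi' hj hj' =>
    simpa (disch := omega) only [map_mul, freeLift_tF] using (h.t_comm hi hi' hj hj').eq
  | l_t_comm hi hi' hj hj' h1 h2 =>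
    simpa (disch := omega) only [map_mul, freeLift_gF, freeLift_tF] using
      (h.l_t_comm hi hi' hj hj' h1 h2).eq
  | l_comm hi hij hj =>
    simpa (disch := omega) only [map_mul, freeLift_gF] using (h.l_comm hi hij hj).eq
  | l_t hi hi' =>
    simpa (disch := omega) only [map_mul, map_add, map_smul, map_sub, freeLift_gF, freeLift_tF]
      using h.l_t hi hi'
  | l_t' hi hi' =>
    simpa (disch := omega) only [map_mul, map_add, map_smul, map_sub, freeLift_gF, freeLift_tF]
      using h.l_t' hi hi'
  | sq hi hi' =>
    simpa (disch := omega) only [map_pow, map_smul, map_mul, map_add, map_ofNat, freeLift_gF,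
      freeLift_eF] using h.sq hi hi'
  | cubic hi hi' =>
    simpa (disch := omega) only [map_sub, map_smul, map_mul, map_add, map_one, freeLift_gF,
      freeLift_eF] using h.cubic hi hi'
  | tl hi hi' =>
    simpa (disch := omega) only [map_smul, map_mul, freeLift_gF, freeLift_eF] using h.tl hi hi'

def AAlg.lift {l t : ℕ → R} (h : IsAFamily d n u l t) : AAlg d n u →ₐ[ℂ] R :=
  RingQuot.liftAlgHom ℂ ⟨freeLift n l t, fun _ _ => h.freeLift_eq_of_aRel⟩

theorem AAlg.lift_lA {l t : ℕ → R} (h : IsAFamily d n u l t) {i : ℕ} (hi : 1 ≤ i)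
    (hi' : i ≤ n - 1) : AAlg.lift h (lA d n u i) = l i := by
  rw [AAlg.lift, lA, RingQuot.liftAlgHom_mkAlgHom_apply, freeLift_gF hi hi']

theorem AAlg.lift_tA {l t : ℕ → R} (h : IsAFamily d n u l t) {j : ℕ} (hj : 1 ≤ j)
    (hj' : j ≤ n) : AAlg.lift h (tA d n u j) = t j := by
  rw [AAlg.lift, tA, RingQuot.liftAlgHom_mkAlgHom_apply, freeLift_tF hj hj']

theorem AAlg.algHom_ext {S : Type*} [Semiring S] [Algebra ℂ S] {f f' : AAlg d n u →ₐ[ℂ] S}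
    (hl : ∀ i, 1 ≤ i → i ≤ n - 1 → f (lA d n u i) = f' (lA d n u i))
    (ht : ∀ j, 1 ≤ j → j ≤ n → f (tA d n u j) = f' (tA d n u j)) : f = f' :=
  RingQuot.ringQuot_ext' ℂ _ _ (freeAlgHom_ext hl ht)

theorem isAFamily_lA_tA (d n : ℕ) (u : ℂ) : IsAFamily d n u (lA d n u) (tA d n u) := by
  have hπ {x y : YHFree n} (hxy : ARel d n u x y) :
      RingQuot.mkAlgHom ℂ (ARel d n u) x = RingQuot.mkAlgHom ℂ (ARel d n u) y :=
    RingQuot.mkAlgHom_rel ℂ hxy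
  have hl (i : ℕ) : RingQuot.mkAlgHom ℂ (ARel d n u) (gF n i) = lA d n u i := rfl
  have ht (j : ℕ) : RingQuot.mkAlgHom ℂ (ARel d n u) (tF n j) = tA d n u j := rfl
  exact
    { t_pow := fun hi hi' => by simpa only [map_pow, map_one, ht] using hπ (.t_pow hi hi')
      t_comm := fun hi hi' hj hj' => by
        simpa only [commute_iff_eq, map_mul, ht] using hπ (.t_comm hi hi' hj hj')
      l_t_comm := fun hi hi' hj hj' h1 h2 => by
        simpa only [commute_iff_eq, map_mul, hl, ht] using hπ (.l_t_comm hi hi' hj hj' h1 h2)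
      l_comm := fun hi hij hj => by
        simpa only [commute_iff_eq, map_mul, hl] using hπ (.l_comm hi hij hj)
      l_t := fun hi hi' => by
        simpa only [map_mul, map_add, map_smul, map_sub, hl, ht] using hπ (.l_t hi hi')
      l_t' := fun hi hi' => by
        simpa only [map_mul, map_add, map_smul, map_sub, hl, ht] using hπ (.l_t' hi hi')
      sq := fun hi hi' => by
        simpa only [map_pow, map_smul, map_mul, map_add, map_ofNat, eF_eq_frameIdem,
          AlgHom.map_frameIdem, hl, ht] using hπ (.sq hi hi')
      cubic := fun hi hi' => by
        simpa only [map_sub, map_smul, map_mul, map_add, map_one, eF_eq_frameIdem,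
          AlgHom.map_frameIdem, hl, ht] using hπ (.cubic hi hi')
      tl := fun hi hi' => by
        simpa only [map_smul, map_mul, eF_eq_frameIdem, AlgHom.map_frameIdem, hl, ht] using
          hπ (.tl hi hi') }

end Presentations

theorem stmt6_general (d n : ℕ) (u : ℂ) (hu' : u ≠ -1) :
    ∃ φ : FTL d n u ≃ₐ[ℂ] AAlg d n u,
      (∀ i : ℕ, 1 ≤ i → i ≤ n - 1 →
        φ (RingQuot.mkAlgHom ℂ (FTLRel d n u) (yg d n u i)) =
          (u + 1) • lA d n u i - 1) ∧
      (∀ j : ℕ, 1 ≤ j → j ≤ n →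
        φ (RingQuot.mkAlgHom ℂ (FTLRel d n u) (yt d n u j)) = tA d n u j) := by
  have hu : u + 1 ≠ 0 := by rwa [ne_eq, add_eq_zero_iff_eq_neg]
  have hA : IsFTLFamily d n u (fun i => (u + 1) • lA d n u i - 1) (tA d n u) :=
    (isFTLFamily_smul_sub_one_iff hu).2 (isAFamily_lA_tA d n u)
  have hF : IsAFamily d n u (fun i => (u + 1)⁻¹ • (RingQuot.mkAlgHom ℂ (FTLRel d n u)
      (yg d n u i) + 1)) (fun j => RingQuot.mkAlgHom ℂ (FTLRel d n u) (yt d n u j)) := by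
    refine (isFTLFamily_smul_sub_one_iff hu).1 ?_
    convert isFTLFamily_yg_yt d n u using 2 with i
    rw [smul_inv_smul₀ hu]
    exact add_sub_cancel_right (G := FTL d n u) _ _
  refine ⟨AlgEquiv.ofAlgHom (FTL.lift hA) (AAlg.lift hF) ?_ ?_,
    fun i hi hi' => FTL.lift_yg hA hi hi', fun j hj hj' => FTL.lift_yt hA hj hj'⟩
  · refine AAlg.algHom_ext (fun i hi hi' => ?_) (fun j hj hj' => ?_)
    · rw [AlgHom.comp_apply, AAlg.lift_lA hF hi hi', map_smul, map_add, map_one,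
        FTL.lift_yg hA hi hi', sub_add_cancel, inv_smul_smul₀ hu, AlgHom.id_apply]
    · rw [AlgHom.comp_apply, AAlg.lift_tA hF hj hj', FTL.lift_yt hA hj hj', AlgHom.id_apply]
  · refine FTL.algHom_ext (fun i hi hi' => ?_) (fun j hj hj' => ?_)
    · rw [AlgHom.comp_apply, FTL.lift_yg hA hi hi', map_sub, map_smul, map_one,
        AAlg.lift_lA hF hi hi', smul_inv_smul₀ hu, AlgHom.id_apply]
      exact add_sub_cancel_right (G := FTL d n u) _ _
    · rw [AlgHom.comp_apply, FTL.lift_yt hA hj hj', AAlg.lift_tA hF hj hj', AlgHom.id_apply]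

/-- For `u ∉ {0, -1}`, the assignment `g_i ↦ (u+1)ℓ_i − 1`, `t_j ↦ t_j`
induces a well-defined `ℂ`-algebra isomorphism from `FTL_{d,n}(u)` onto `A`. -/
theorem stmt6 (d n : ℕ) (hd : 1 ≤ d) (hn : 3 ≤ n) (u : ℂ) (hu : u ≠ 0) (hu' : u ≠ -1) :
    ∃ φ : FTL d n u ≃ₐ[ℂ] AAlg d n u,
      (∀ i : ℕ, 1 ≤ i → i ≤ n - 1 →
        φ (RingQuot.mkAlgHom ℂ (FTLRel d n u) (yg d n u i)) =
          (u + 1) • lA d n u i - 1) ∧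
      (∀ j : ℕ, 1 ≤ j → j ≤ n →
        φ (RingQuot.mkAlgHom ℂ (FTLRel d n u) (yt d n u j)) = tA d n u j) :=
  stmt6_general d n u hu'
end
end

section
/- In the Yokonuma–Hecke algebra Y_{d,n}(u) (n ≥ 3) the following identities hold for the element r_{1,2}: (1) g_1 r_{1,2} = [1 + (u−1)e_1] r_{1,2}; (2) g_2 r_{1,2} = [1 + (u−1)e_2] r_{1,2}; (3) g_1 g_2 r_{1,2} = [1 + (u−1)e_1 + (u−1)e_{1,3} + (u−1)² e_1 e_2] r_{1,2}; (4) g_2 g_1 r_{1,2} = [1 + (u−1)e_2 + (u−1)e_{1,3} + (u−1)² e_1 e_2] r_{1,2}; (5) g_1 g_2 g_1 r_{1,2} = [1 + (u−1)(e_1 + e_2 + e_{1,3}) + (u−1)²(u+2) e_1 e_2] r_{1,2}. -/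
noncomputable section

open scoped BigOperators

namespace Stmt8Aux

variable {A : Type*} [Ring A] [Algebra ℂ A]

def Ee (d : ℕ) (a b : A) : A := (d : ℂ)⁻¹ • ∑ s ∈ Finset.range d, a ^ s * b ^ (d - s)

theorem absorb_one {d : ℕ} (hd : 1 ≤ d) {a b : A} (hab : Commute a b)
    (ha : a ^ d = 1) (hb : b ^ d = 1) : b * Ee d a b = a * Ee d a b := by
  obtain ⟨m, rfl⟩ : ∃ m, d = m + 1 := ⟨d - 1, by omega⟩
  unfold Ee
  rw [mul_smul_comm, mul_smul_comm]
  congr 1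
  rw [Finset.mul_sum, Finset.mul_sum,
    Finset.sum_range_succ' (fun s => b * (a ^ s * b ^ (m + 1 - s))) m,
    Finset.sum_range_succ (fun s => a * (a ^ s * b ^ (m + 1 - s))) m]
  congr 1
  · refine Finset.sum_congr rfl fun s hs => ?_
    rw [Finset.mem_range] at hs
    have h1 : m + 1 - (s + 1) = m - s := by omega
    have h2 : m + 1 - s = (m - s) + 1 := by omega
    rw [h1, h2]
    calc b * (a ^ (s + 1) * b ^ (m - s))
        = (b * a ^ (s + 1)) * b ^ (m - s) := by rw [mul_assoc]
      _ = (a ^ (s + 1) * b) * b ^ (m - s) := by rw [(hab.symm.pow_right (s + 1)).eq]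
      _ = a ^ (s + 1) * b ^ (m - s + 1) := by rw [mul_assoc, ← pow_succ']
      _ = a * (a ^ s * b ^ (m - s + 1)) := by rw [pow_succ', mul_assoc]
  · have h3 : m + 1 - m = 1 := by omega
    rw [pow_zero, one_mul, Nat.sub_zero, h3, hb, mul_one, pow_one, ← mul_assoc, ← pow_succ', ha,
      one_mul]

theorem absorb_pow {d : ℕ} (hd : 1 ≤ d) {a b : A} (hab : Commute a b)
    (ha : a ^ d = 1) (hb : b ^ d = 1) (k : ℕ) : b ^ k * Ee d a b = a ^ k * Ee d a b := by
  induction k with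
  | zero => rw [pow_zero, pow_zero]
  | succ k ih =>
    rw [pow_succ, mul_assoc, absorb_one hd hab ha hb, ← mul_assoc, ← (hab.pow_right k).eq,
      mul_assoc, ih, ← mul_assoc, ← pow_succ']

theorem Ee_symm {d : ℕ} (hd : 1 ≤ d) {a b : A} (hab : Commute a b)
    (ha : a ^ d = 1) (hb : b ^ d = 1) : Ee d a b = Ee d b a := by
  obtain ⟨m, rfl⟩ : ∃ m, d = m + 1 := ⟨d - 1, by omega⟩
  unfold Ee
  congr 1
  rw [Finset.sum_range_succ' (fun s => a ^ s * b ^ (m + 1 - s)) m,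
    Finset.sum_range_succ' (fun s => b ^ s * a ^ (m + 1 - s)) m,
    ← Finset.sum_range_reflect (fun s => b ^ (s + 1) * a ^ (m + 1 - (s + 1))) m]
  congr 1
  · refine Finset.sum_congr rfl fun s hs => ?_
    rw [Finset.mem_range] at hs
    have e1 : m + 1 - (s + 1) = m - s := by omega
    have e2 : m - 1 - s + 1 = m - s := by omega
    have e3 : m + 1 - (m - s) = s + 1 := by omega
    rw [e1, e2, e3]
    exact (hab.pow_pow (s + 1) (m - s)).eq
  · simp only [pow_zero, one_mul, Nat.sub_zero]
    rw [ha, hb]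

theorem Ee_one {d : ℕ} (hd : 1 ≤ d) {a : A} (ha : a ^ d = 1) : Ee d a a = 1 := by
  unfold Ee
  have h : ∀ s ∈ Finset.range d, a ^ s * a ^ (d - s) = 1 := fun s hs => by
    rw [Finset.mem_range] at hs
    rw [← pow_add, show s + (d - s) = d by omega, ha]
  rw [Finset.sum_congr rfl h, Finset.sum_const, Finset.card_range,
    ← Nat.cast_smul_eq_nsmul ℂ, smul_smul,
    inv_mul_cancel₀ (Nat.cast_ne_zero.mpr (by omega : d ≠ 0)), one_smul]

theorem Ee_semiconj {d : ℕ} {g a a' b b' : A} (h1 : SemiconjBy g a a') (h2 : SemiconjBy g b b') :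
    g * Ee d a b = Ee d a' b' * g := by
  unfold Ee
  rw [mul_smul_comm, smul_mul_assoc]
  congr 1
  rw [Finset.mul_sum, Finset.sum_mul]
  exact Finset.sum_congr rfl fun s _ => ((h1.pow_right s).mul_right (h2.pow_right (d - s))).eq

theorem Ee_commute {d : ℕ} {c a b : A} (h1 : Commute c a) (h2 : Commute c b) :
    Commute c (Ee d a b) := Ee_semiconj h1 h2

theorem Ee_subst_right {d : ℕ} {a b : A} (c : A) {X : A} (hX : ∀ k, b ^ k * X = a ^ k * X) :
    Ee d c b * X = Ee d c a * X := by
  unfold Ee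
  rw [smul_mul_assoc, smul_mul_assoc]
  congr 1
  rw [Finset.sum_mul, Finset.sum_mul]
  exact Finset.sum_congr rfl fun s _ => by rw [mul_assoc, mul_assoc, hX]

theorem Ee_subst_left {d : ℕ} {a b : A} (c : A) {X : A} (hX : ∀ k, b ^ k * X = a ^ k * X)
    (hcX : Commute c X) : Ee d b c * X = Ee d a c * X := by
  unfold Ee
  rw [smul_mul_assoc, smul_mul_assoc]
  congr 1
  rw [Finset.sum_mul, Finset.sum_mul]
  refine Finset.sum_congr rfl fun s _ => ?_
  calc b ^ s * c ^ (d - s) * X = b ^ s * (X * c ^ (d - s)) := by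
        rw [mul_assoc, (hcX.pow_left (d - s)).eq]
    _ = (b ^ s * X) * c ^ (d - s) := by rw [mul_assoc]
    _ = (a ^ s * X) * c ^ (d - s) := by rw [hX]
    _ = a ^ s * c ^ (d - s) * X := by rw [mul_assoc, ← (hcX.pow_left (d - s)).eq, mul_assoc]

end Stmt8Aux
namespace Stmt8Aux

variable {A : Type*} [Ring A] [Algebra ℂ A]

theorem master (d : ℕ) (hd : 1 ≤ d) (u : ℂ) (t1 t2 t3 g1 g2 : A)
    (c12 : Commute t1 t2) (c13 : Commute t1 t3) (c23 : Commute t2 t3)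
    (p1 : t1 ^ d = 1) (p2 : t2 ^ d = 1) (p3 : t3 ^ d = 1)
    (s11 : g1 * t1 = t2 * g1) (s12 : g1 * t2 = t1 * g1) (s13 : g1 * t3 = t3 * g1)
    (s21 : g2 * t1 = t1 * g2) (s22 : g2 * t2 = t3 * g2) (s23 : g2 * t3 = t2 * g2)
    (hbraid : g1 * g2 * g1 = g2 * g1 * g2)
    (q1 : g1 ^ 2 = 1 + (u - 1) • Ee d t1 t2 + (u - 1) • (Ee d t1 t2 * g1))
    (q2 : g2 ^ 2 = 1 + (u - 1) • Ee d t2 t3 + (u - 1) • (Ee d t2 t3 * g2)) :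
    (g1 * (Ee d t1 t2 * Ee d t2 t3 *
        (1 + g1 + g2 + g1 * g2 + g2 * g1 + g1 * g2 * g1)) =
      (1 + (u - 1) • Ee d t1 t2) * (Ee d t1 t2 * Ee d t2 t3 *
        (1 + g1 + g2 + g1 * g2 + g2 * g1 + g1 * g2 * g1))) ∧
    (g2 * (Ee d t1 t2 * Ee d t2 t3 *
        (1 + g1 + g2 + g1 * g2 + g2 * g1 + g1 * g2 * g1)) =
      (1 + (u - 1) • Ee d t2 t3) * (Ee d t1 t2 * Ee d t2 t3 *
        (1 + g1 + g2 + g1 * g2 + g2 * g1 + g1 * g2 * g1))) ∧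
    (g1 * g2 * (Ee d t1 t2 * Ee d t2 t3 *
        (1 + g1 + g2 + g1 * g2 + g2 * g1 + g1 * g2 * g1)) =
      (1 + (u - 1) • Ee d t1 t2 + (u - 1) • Ee d t1 t3 +
        ((u - 1) ^ 2) • (Ee d t1 t2 * Ee d t2 t3)) * (Ee d t1 t2 * Ee d t2 t3 *
        (1 + g1 + g2 + g1 * g2 + g2 * g1 + g1 * g2 * g1))) ∧
    (g2 * g1 * (Ee d t1 t2 * Ee d t2 t3 *
        (1 + g1 + g2 + g1 * g2 + g2 * g1 + g1 * g2 * g1)) =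
      (1 + (u - 1) • Ee d t2 t3 + (u - 1) • Ee d t1 t3 +
        ((u - 1) ^ 2) • (Ee d t1 t2 * Ee d t2 t3)) * (Ee d t1 t2 * Ee d t2 t3 *
        (1 + g1 + g2 + g1 * g2 + g2 * g1 + g1 * g2 * g1))) ∧
    (g1 * g2 * g1 * (Ee d t1 t2 * Ee d t2 t3 *
        (1 + g1 + g2 + g1 * g2 + g2 * g1 + g1 * g2 * g1)) =
      (1 + (u - 1) • (Ee d t1 t2 + Ee d t2 t3 + Ee d t1 t3) +
        ((u - 1) ^ 2 * (u + 2)) • (Ee d t1 t2 * Ee d t2 t3)) * (Ee d t1 t2 * Ee d t2 t3 *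
        (1 + g1 + g2 + g1 * g2 + g2 * g1 + g1 * g2 * g1))) := by
  set E1 := Ee d t1 t2 with hE1
  set E2 := Ee d t2 t3 with hE2
  set E13 := Ee d t1 t3 with hE13
  set G := 1 + g1 + g2 + g1 * g2 + g2 * g1 + g1 * g2 * g1 with hG
  set P := E1 * E2 with hP
  -- basic commutation facts
  have ct1e1 : Commute t1 E1 := Ee_commute (Commute.refl t1) c12
  have ct2e1 : Commute t2 E1 := Ee_commute c12.symm (Commute.refl t2)
  have ct3e1 : Commute t3 E1 := Ee_commute c13.symm c23.symm
  have ct1e2 : Commute t1 E2 := Ee_commute c12 c13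
  have ct3e2 : Commute t3 E2 := Ee_commute c23.symm (Commute.refl t3)
  have come12 : Commute E1 E2 := Ee_commute ct2e1.symm ct3e1.symm
  -- absorption
  have ab1 : ∀ k, t2 ^ k * E1 = t1 ^ k * E1 := absorb_pow hd c12 p1 p2
  have ab2 : ∀ k, t3 ^ k * E2 = t2 ^ k * E2 := absorb_pow hd c23 p2 p3
  have idem1 : E1 * E1 = E1 := by
    rw [hE1, Ee_subst_right t1 ab1, Ee_one hd p1, one_mul]
  have idem2 : E2 * E2 = E2 := by
    rw [hE2, Ee_subst_right t2 ab2, Ee_one hd p2, one_mul]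
  have key13 : E13 * E1 = E2 * E1 := by
    rw [hE13, hE2, Ee_subst_left t3 (fun k => (ab1 k).symm) ct3e1]
  have key13' : E13 * E2 = E1 * E2 := by
    rw [hE13, hE1, Ee_subst_right t1 ab2]
  have hPe1 : E1 * P = P := by rw [hP, ← mul_assoc, idem1]
  have hPe2 : E2 * P = P := by rw [hP, ← mul_assoc, ← come12.eq, mul_assoc, idem2]
  have hPe13 : E13 * P = P := by
    rw [hP, ← mul_assoc, key13, ← come12.eq, mul_assoc, idem2]
  have hPP : P * P = P := by
    calc P * P = E1 * (E2 * P) := by rw [hP, mul_assoc]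
      _ = E1 * P := by rw [hPe2]
      _ = P := hPe1
  -- g commutation with P
  have hsymm21 : Ee d t2 t1 = E1 := Ee_symm hd c12.symm p2 p1
  have hsymm32 : Ee d t3 t2 = E2 := Ee_symm hd c23.symm p3 p2
  have hg1e1 : g1 * E1 = E1 * g1 := by rw [hE1, Ee_semiconj s11 s12, hsymm21]
  have hg1e2 : g1 * E2 = E13 * g1 := by rw [hE2, Ee_semiconj s12 s13, ← hE13]
  have hg2e1 : g2 * E1 = E13 * g2 := by rw [hE1, Ee_semiconj s21 s22, ← hE13]
  have hg2e2 : g2 * E2 = E2 * g2 := by rw [hE2, Ee_semiconj s22 s23, hsymm32]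
  have come113 : Commute E1 E13 := by
    rw [hE13]; exact Ee_commute ct1e1.symm ct3e1.symm
  have hg1P : g1 * P = P * g1 := by
    calc g1 * P = (g1 * E1) * E2 := by rw [hP, ← mul_assoc]
      _ = E1 * (E13 * g1) := by rw [hg1e1, mul_assoc, hg1e2]
      _ = (E1 * E13) * g1 := by rw [← mul_assoc]
      _ = P * g1 := by rw [come113.eq, key13, ← come12.eq, ← hP]
  have hg2P : g2 * P = P * g2 := by
    calc g2 * P = (g2 * E1) * E2 := by rw [hP, ← mul_assoc]
      _ = E13 * (E2 * g2) := by rw [hg2e1, mul_assoc, hg2e2]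
      _ = (E13 * E2) * g2 := by rw [← mul_assoc]
      _ = P * g2 := by rw [key13', ← hP]
  -- movers
  have w1 : ∀ X, P * (g1 * X) = g1 * (P * X) := fun X => by
    rw [← mul_assoc, ← hg1P, mul_assoc]
  have w2 : ∀ X, P * (g2 * X) = g2 * (P * X) := fun X => by
    rw [← mul_assoc, ← hg2P, mul_assoc]
  -- quadratic relations against P
  have comE1P : Commute E1 P := (Commute.refl E1).mul_right come12
  have comE2P : Commute E2 P := come12.symm.mul_right (Commute.refl E2)
  have hPE1 : P * E1 = P := by rw [← comE1P.eq, hPe1]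
  have hPE2 : P * E2 = P := by rw [← comE2P.eq, hPe2]
  have sq1e : P * (g1 * g1) = u • P + (u - 1) • (P * g1) := by
    rw [show g1 * g1 = g1 ^ 2 from (sq g1).symm, q1, mul_add, mul_add, mul_one,
      mul_smul_comm, mul_smul_comm, hPE1, ← mul_assoc, hPE1]
    module
  have sq2e : P * (g2 * g2) = u • P + (u - 1) • (P * g2) := by
    rw [show g2 * g2 = g2 ^ 2 from (sq g2).symm, q2, mul_add, mul_add, mul_one,
      mul_smul_comm, mul_smul_comm, hPE2, ← mul_assoc, hPE2]
    module
  have sq1 : ∀ X, P * (g1 * (g1 * X)) = u • (P * X) + (u - 1) • (P * (g1 * X)) := fun X => by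
    have h : P * (g1 * (g1 * X)) = (P * (g1 * g1)) * X := by noncomm_ring
    rw [h, sq1e, add_mul, smul_mul_assoc, smul_mul_assoc, mul_assoc P g1 X]
  have sq2 : ∀ X, P * (g2 * (g2 * X)) = u • (P * X) + (u - 1) • (P * (g2 * X)) := fun X => by
    have h : P * (g2 * (g2 * X)) = (P * (g2 * g2)) * X := by noncomm_ring
    rw [h, sq2e, add_mul, smul_mul_assoc, smul_mul_assoc, mul_assoc P g2 X]
  -- the two core identities
  have M1 : g1 * (P * G) = u • (P * G) := by
    rw [← mul_assoc, hg1P, mul_assoc, hG]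
    have hx : g1 * (1 + g1 + g2 + g1 * g2 + g2 * g1 + g1 * g2 * g1) =
        g1 + g1 * g1 + g1 * g2 + g1 * (g1 * g2) + g1 * (g2 * g1) + g1 * (g1 * (g2 * g1)) := by
      noncomm_ring
    rw [hx]
    simp only [mul_add, mul_one]
    rw [sq1e, sq1 g2, sq1 (g2 * g1)]
    simp only [smul_add, mul_assoc g1 g2 g1]
    module
  have hbr : g2 * (g1 * g2) = g1 * (g2 * g1) := by
    rw [← mul_assoc, ← hbraid, mul_assoc]
  have hbr2 : g2 * (g1 * (g2 * g1)) = g1 * (g2 * (g1 * g1)) := by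
    calc g2 * (g1 * (g2 * g1)) = (g2 * g1 * g2) * g1 := by noncomm_ring
      _ = (g1 * g2 * g1) * g1 := by rw [← hbraid]
      _ = g1 * (g2 * (g1 * g1)) := by noncomm_ring
  have hlast : P * (g2 * (g1 * (g2 * g1))) =
      u • (P * (g1 * g2)) + (u - 1) • (P * (g1 * (g2 * g1))) := by
    rw [hbr2, w1, w2, sq1e, mul_add, mul_add, mul_smul_comm, mul_smul_comm, mul_smul_comm,
      mul_smul_comm, hg2P, ← w1, ← w2, ← w1]
  have M2 : g2 * (P * G) = u • (P * G) := by
    rw [← mul_assoc, hg2P, mul_assoc, hG]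
    have hx : g2 * (1 + g1 + g2 + g1 * g2 + g2 * g1 + g1 * g2 * g1) =
        g2 + g2 * g1 + g2 * g2 + g2 * (g1 * g2) + g2 * (g2 * g1) + g2 * (g1 * (g2 * g1)) := by
      noncomm_ring
    rw [hx]
    simp only [mul_add, mul_one]
    rw [hbr, sq2e, sq2 g1, hlast]
    simp only [smul_add, mul_assoc g1 g2 g1]
    module
  -- absorption against r = P * G
  have hRe1 : E1 * (P * G) = P * G := by rw [← mul_assoc, hPe1]
  have hRe2 : E2 * (P * G) = P * G := by rw [← mul_assoc, hPe2]
  have hRe13 : E13 * (P * G) = P * G := by rw [← mul_assoc, hPe13]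
  have hRP : P * (P * G) = P * G := by rw [← mul_assoc, hPP]
  have M1' : ∀ c : ℂ, g1 * (c • (P * G)) = (c * u) • (P * G) := fun c => by
    rw [mul_smul_comm, M1, smul_smul]
  have M2' : ∀ c : ℂ, g2 * (c • (P * G)) = (c * u) • (P * G) := fun c => by
    rw [mul_smul_comm, M2, smul_smul]
  refine ⟨?_, ?_, ?_, ?_, ?_⟩
  · rw [M1, add_mul, one_mul, smul_mul_assoc, hRe1]
    module
  · rw [M2, add_mul, one_mul, smul_mul_assoc, hRe2]
    module
  · rw [mul_assoc, M2, M1' u, add_mul, add_mul, add_mul, one_mul, smul_mul_assoc,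
      smul_mul_assoc, smul_mul_assoc, hRe1, hRe13, hRP]
    module
  · rw [mul_assoc, M1, M2' u, add_mul, add_mul, add_mul, one_mul, smul_mul_assoc,
      smul_mul_assoc, smul_mul_assoc, hRe2, hRe13, hRP]
    module
  · rw [mul_assoc, mul_assoc, M1, M2' u, M1' (u * u), add_mul, add_mul, one_mul,
      smul_mul_assoc, smul_mul_assoc, hRP, add_mul, add_mul, hRe1, hRe2, hRe13]
    module

end Stmt8Aux
namespace Stmt8Aux

variable (d n : ℕ) (u : ℂ)

theorem yt_mul_comm {i j : ℕ} (hi : 1 ≤ i) (hi' : i ≤ n) (hj : 1 ≤ j) (hj' : j ≤ n) :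
    yt d n u i * yt d n u j = yt d n u j * yt d n u i := by
  simpa only [yt, map_mul] using
    RingQuot.mkAlgHom_rel ℂ (YHRel.t_comm (d := d) (n := n) (u := u) hi hi' hj hj')

theorem yt_pow_one {i : ℕ} (hi : 1 ≤ i) (hi' : i ≤ n) : yt d n u i ^ d = 1 := by
  simpa only [yt, map_pow, map_one] using
    RingQuot.mkAlgHom_rel ℂ (YHRel.t_pow (d := d) (n := n) (u := u) hi hi')

theorem yg_t {i : ℕ} (hi : 1 ≤ i) (hi' : i ≤ n - 1) :
    yg d n u i * yt d n u i = yt d n u (i + 1) * yg d n u i := by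
  simpa only [yg, yt, map_mul] using
    RingQuot.mkAlgHom_rel ℂ (YHRel.g_t (d := d) (n := n) (u := u) hi hi')

theorem yg_t' {i : ℕ} (hi : 1 ≤ i) (hi' : i ≤ n - 1) :
    yg d n u i * yt d n u (i + 1) = yt d n u i * yg d n u i := by
  simpa only [yg, yt, map_mul] using
    RingQuot.mkAlgHom_rel ℂ (YHRel.g_t' (d := d) (n := n) (u := u) hi hi')

theorem yg_t_comm {i j : ℕ} (hi : 1 ≤ i) (hi' : i ≤ n - 1) (hj : 1 ≤ j) (hj' : j ≤ n)
    (h1 : j ≠ i) (h2 : j ≠ i + 1) :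
    yg d n u i * yt d n u j = yt d n u j * yg d n u i := by
  simpa only [yg, yt, map_mul] using
    RingQuot.mkAlgHom_rel ℂ (YHRel.g_t_comm (d := d) (n := n) (u := u) hi hi' hj hj' h1 h2)

theorem ybraid {i : ℕ} (hi : 1 ≤ i) (hi' : i + 1 ≤ n - 1) :
    yg d n u i * yg d n u (i + 1) * yg d n u i =
      yg d n u (i + 1) * yg d n u i * yg d n u (i + 1) := by
  simpa only [yg, map_mul] using
    RingQuot.mkAlgHom_rel ℂ (YHRel.braid (d := d) (n := n) (u := u) hi hi')

theorem yg_sq {i : ℕ} (hi : 1 ≤ i) (hi' : i ≤ n - 1) :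
    yg d n u i ^ 2 = 1 + (u - 1) • ye d n u i + (u - 1) • (ye d n u i * yg d n u i) := by
  simpa only [yg, yt, ye, eF, map_pow, map_add, map_one, map_smul, map_mul, map_sum] using
    RingQuot.mkAlgHom_rel ℂ (YHRel.quad (d := d) (n := n) (u := u) hi hi')

end Stmt8Aux

/-- Identities for `r_{1,2} = e_1 e_2 g_{1,2}` in `Y_{d,n}(u)` (`n ≥ 3`). -/
theorem stmt8 (d n : ℕ) (hd : 1 ≤ d) (hn : 3 ≤ n) (u : ℂ) (hu : u ≠ 0) :
    (yg d n u 1 * yr d n u 1 = (1 + (u - 1) • ye d n u 1) * yr d n u 1) ∧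
    (yg d n u 2 * yr d n u 1 = (1 + (u - 1) • ye d n u 2) * yr d n u 1) ∧
    (yg d n u 1 * yg d n u 2 * yr d n u 1 =
      (1 + (u - 1) • ye d n u 1 + (u - 1) • yeij d n u 1 3 +
        ((u - 1) ^ 2) • (ye d n u 1 * ye d n u 2)) * yr d n u 1) ∧
    (yg d n u 2 * yg d n u 1 * yr d n u 1 =
      (1 + (u - 1) • ye d n u 2 + (u - 1) • yeij d n u 1 3 +
        ((u - 1) ^ 2) • (ye d n u 1 * ye d n u 2)) * yr d n u 1) ∧
    (yg d n u 1 * yg d n u 2 * yg d n u 1 * yr d n u 1 =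
      (1 + (u - 1) • (ye d n u 1 + ye d n u 2 + yeij d n u 1 3) +
        ((u - 1) ^ 2 * (u + 2)) • (ye d n u 1 * ye d n u 2)) * yr d n u 1) := by
  exact Stmt8Aux.master d hd u (yt d n u 1) (yt d n u 2) (yt d n u 3) (yg d n u 1) (yg d n u 2)
    (Stmt8Aux.yt_mul_comm d n u (by omega) (by omega) (by omega) (by omega))
    (Stmt8Aux.yt_mul_comm d n u (by omega) (by omega) (by omega) (by omega))
    (Stmt8Aux.yt_mul_comm d n u (by omega) (by omega) (by omega) (by omega))
    (Stmt8Aux.yt_pow_one d n u (by omega) (by omega))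
    (Stmt8Aux.yt_pow_one d n u (by omega) (by omega))
    (Stmt8Aux.yt_pow_one d n u (by omega) (by omega))
    (Stmt8Aux.yg_t d n u (i := 1) (by omega) (by omega))
    (Stmt8Aux.yg_t' d n u (i := 1) (by omega) (by omega))
    (Stmt8Aux.yg_t_comm d n u (i := 1) (j := 3) (by omega) (by omega) (by omega) (by omega)
      (by omega) (by omega))
    (Stmt8Aux.yg_t_comm d n u (i := 2) (j := 1) (by omega) (by omega) (by omega) (by omega)
      (by omega) (by omega))
    (Stmt8Aux.yg_t d n u (i := 2) (by omega) (by omega))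
    (Stmt8Aux.yg_t' d n u (i := 2) (by omega) (by omega))
    (Stmt8Aux.ybraid d n u (i := 1) (by omega) (by omega))
    (Stmt8Aux.yg_sq d n u (i := 1) (by omega) (by omega))
    (Stmt8Aux.yg_sq d n u (i := 2) (by omega) (by omega))
end
end

section
/- Fix an integer d ≥ 1, a complex number u with u ≠ −1, and a nonempty subset D of ℤ/dℤ. Define x : ℤ/dℤ → ℂ with x_0 = 1 and indices read modulo d, E^{(m)} := (1/d) Σ_{s∈ℤ/dℤ} x_{m+s} x_{−s}, and E := E^{(0)}. (i) If z = −1/((u+1)|D|) and x_k = −z(u+1) Σ_{m∈D} exp(2πi·km/d) for all k ∈ ℤ/dℤ, then x_k = (1/|D|) Σ_{m∈D} exp(2πi·km/d) for all k, and the E-system holds: E^{(m)} = x_m · E for all m ∈ ℤ/dℤ. (ii) If z = −1/|D| and x_k = −z Σ_{m∈D} exp(2πi·km/d) for all k ∈ ℤ/dℤ, then likewise x_k = (1/|D|) Σ_{m∈D} exp(2πi·km/d) for all k and E^{(m)} = x_m · E for all m ∈ ℤ/dℤ. -/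
noncomputable section

open scoped BigOperators

/-- `E^{(m)} := (1/d) ∑_{s ∈ ℤ/dℤ} x_{m+s} x_{-s}` (indices of `x` read modulo `d`). -/
def Efun (d : ℕ) (x : ZMod d → ℂ) (m : ZMod d) : ℂ :=
  (d : ℂ)⁻¹ * ∑ s ∈ Finset.range d, x (m + (s : ZMod d)) * x (-(s : ZMod d))

/-- The character value `χ_k(m) = exp(2πi·km/d)`. -/
def chi (d : ℕ) (k m : ZMod d) : ℂ :=
  Complex.exp (2 * Real.pi * Complex.I * ((k.val : ℂ) * (m.val : ℂ)) / (d : ℂ))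

lemma key (d : ℕ) (hd : 1 ≤ d) (D : Finset (ZMod d)) (hD : D.Nonempty)
    (x : ZMod d → ℂ) (hx0 : x 0 = 1)
    (hx : ∀ k, x k = (D.card : ℂ)⁻¹ * ∑ m ∈ D, chi d k m) :
    ∀ m, Efun d x m = x m * Efun d x 0 := by
  haveI : NeZero d := ⟨by omega⟩
  set ζ := Complex.exp (2 * Real.pi * Complex.I / d) with hζdef
  have hζ : IsPrimitiveRoot ζ d := Complex.isPrimitiveRoot_exp d (by omega)
  have hζd : ζ ^ d = 1 := hζ.pow_eq_one
  have psi : ∀ a b : ZMod d, ζ ^ (a + b).val = ζ ^ a.val * ζ ^ b.val := by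
    intro a b
    rw [ZMod.val_add, ← pow_eq_pow_mod _ hζd, pow_add]
  have chi_eq : ∀ k m : ZMod d, chi d k m = ζ ^ (k * m).val := by
    intro k m
    rw [ZMod.val_mul, ← pow_eq_pow_mod _ hζd, ← Complex.exp_nat_mul]
    unfold chi
    congr 1
    push_cast
    ring
  have geom : ∀ c : ZMod d, ∑ s ∈ Finset.range d, ζ ^ (((s : ZMod d) * c).val)
      = if c = 0 then (d : ℂ) else 0 := by
    intro c
    by_cases hc : c = 0
    · simp [hc]
    · rw [if_neg hc]
      have hterm : ∀ s ∈ Finset.range d, ζ ^ (((s : ZMod d) * c).val) = (ζ ^ c.val) ^ s := by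
        intro s hs
        rw [ZMod.val_mul, ← pow_eq_pow_mod _ hζd,
          ZMod.val_natCast_of_lt (Finset.mem_range.mp hs), ← pow_mul, mul_comm]
      have hne : ζ ^ c.val ≠ 1 := hζ.pow_ne_one_of_pos_of_lt (by
          have := ZMod.val_pos.mpr hc; omega) (ZMod.val_lt c)
      rw [Finset.sum_congr rfl hterm, geom_sum_eq hne, ← pow_mul, mul_comm c.val d,
        pow_mul, hζd, one_pow]
      simp
  have hC : (D.card : ℂ) ≠ 0 := Nat.cast_ne_zero.mpr hD.card_pos.ne'
  have hd0 : (d : ℂ) ≠ 0 := Nat.cast_ne_zero.mpr (by omega)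
  have main : ∀ m, Efun d x m = (D.card : ℂ)⁻¹ * x m := by
    intro m
    unfold Efun
    have step : ∀ s ∈ Finset.range d,
        x (m + (s : ZMod d)) * x (-(s : ZMod d)) =
        (D.card : ℂ)⁻¹ * (D.card : ℂ)⁻¹ *
          ∑ a ∈ D, ∑ b ∈ D, ζ ^ ((m * a).val) * ζ ^ (((s : ZMod d) * (a - b)).val) := by
      intro s _
      rw [hx, hx, mul_mul_mul_comm, Finset.sum_mul_sum]
      congr 1
      apply Finset.sum_congr rfl; intro a _
      apply Finset.sum_congr rfl; intro b _
      rw [chi_eq, chi_eq, ← psi, ← psi]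
      congr 2
      ring
    rw [Finset.sum_congr rfl step, ← Finset.mul_sum, Finset.sum_comm]
    have inner : ∀ a ∈ D,
        ∑ s ∈ Finset.range d, ∑ b ∈ D, ζ ^ ((m * a).val) * ζ ^ (((s : ZMod d) * (a - b)).val)
        = (d : ℂ) * ζ ^ ((m * a).val) := by
      intro a ha
      rw [Finset.sum_comm]
      have h1 : ∀ b ∈ D,
          ∑ s ∈ Finset.range d, ζ ^ ((m * a).val) * ζ ^ (((s : ZMod d) * (a - b)).val)
          = if b = a then ζ ^ ((m * a).val) * d else 0 := by
        intro b _
        rw [← Finset.mul_sum, geom]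
        by_cases h : b = a
        · rw [if_pos h, if_pos (by rw [sub_eq_zero, h])]
        · rw [if_neg h, if_neg (by rw [sub_eq_zero]; exact fun h' => h h'.symm), mul_zero]
      rw [Finset.sum_congr rfl h1, Finset.sum_ite_eq' D a, if_pos ha, mul_comm]
    rw [Finset.sum_congr rfl inner, ← Finset.mul_sum, hx m]
    have : ∑ a ∈ D, chi d m a = ∑ a ∈ D, ζ ^ ((m * a).val) :=
      Finset.sum_congr rfl fun a _ => chi_eq m a
    rw [this]
    field_simp
  intro m
  rw [main m, main 0, hx0]
  ring

/-- For `u ≠ -1` and a nonempty `D ⊆ ℤ/dℤ`: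
(i) if `z = -1/((u+1)|D|)` and `x_k = -z(u+1) ∑_{m∈D} exp(2πikm/d)` for all `k`, then
`x_k = (1/|D|) ∑_{m∈D} exp(2πikm/d)` for all `k` and the E-system `E^{(m)} = x_m E`
holds; (ii) likewise if `z = -1/|D|` and `x_k = -z ∑_{m∈D} exp(2πikm/d)` for all `k`. -/
theorem stmt17 (d : ℕ) (hd : 1 ≤ d) (u : ℂ) (hu : u ≠ -1)
    (D : Finset (ZMod d)) (hD : D.Nonempty)
    (x : ZMod d → ℂ) (hx0 : x 0 = 1) (z : ℂ) :
    ((z = -1 / ((u + 1) * (D.card : ℂ)) ∧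
        (∀ k : ZMod d, x k = -z * (u + 1) * ∑ m ∈ D, chi d k m)) →
      (∀ k : ZMod d, x k = (D.card : ℂ)⁻¹ * ∑ m ∈ D, chi d k m) ∧
        (∀ m : ZMod d, Efun d x m = x m * Efun d x 0)) ∧
    ((z = -1 / (D.card : ℂ) ∧
        (∀ k : ZMod d, x k = -z * ∑ m ∈ D, chi d k m)) →
      (∀ k : ZMod d, x k = (D.card : ℂ)⁻¹ * ∑ m ∈ D, chi d k m) ∧
        (∀ m : ZMod d, Efun d x m = x m * Efun d x 0)) := by
  have hC : (D.card : ℂ) ≠ 0 := Nat.cast_ne_zero.mpr hD.card_pos.ne'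
  have hu1 : u + 1 ≠ 0 := fun h => hu (by linear_combination h)
  constructor
  · rintro ⟨hz, hk⟩
    have hx : ∀ k : ZMod d, x k = (D.card : ℂ)⁻¹ * ∑ m ∈ D, chi d k m := by
      intro k
      rw [hk k, hz]
      field_simp
    exact ⟨hx, key d hd D hD x hx0 hx⟩
  · rintro ⟨hz, hk⟩
    have hx : ∀ k : ZMod d, x k = (D.card : ℂ)⁻¹ * ∑ m ∈ D, chi d k m := by
      intro k
      rw [hk k, hz]
      field_simp
    exact ⟨hx, key d hd D hD x hx0 hx⟩
end
end
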